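/- arXiv:quant-ph/0203060 — 6 statements merged into one kernel-verified Lean document; each statement's English description precedes it below -/
import Mathlib

section
/- For every complex antisymmetric n×n matrix w, there exists a unitary n×n matrix U such that w' = U w Uᵀ is block diagonal, consisting of 2×2 blocks of the form [[0, zᵢ],[-zᵢ, 0]] with zᵢ > 0 real, followed by a zero block. -/
/-!
Put `B x y = xᵀ w y`. The Riesz map `a` with `⟪a y, x⟫ = B x y` is conjugate-linear, so `a ∘ a`
is linear, and skew-symmetry of `B` makes it self-adjoint with `⟪a (a y), y⟫ = -‖a y‖²`. An
eigenvector `v` with `a v ≠ 0` therefore has `a (a v) = -σ² v` for `σ = ‖a v‖`, and `u = a v / σ`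
satisfies `B x v = σ ⟪u, x⟫` and `B x u = -σ ⟪v, x⟫`. Hence `u, v` are orthonormal, carry the block
`[[0, σ], [-σ, 0]]`, and are `B`-orthogonal to their orthogonal complement, on which we induct.
The rows of `U` form the resulting orthonormal basis.
-/

open Matrix Module
open scoped InnerProductSpace

def skewNormalForm {𝕜 : Type*} [RCLike 𝕜] (r : ℕ) (z : ℕ → ℝ) (i j : ℕ) : 𝕜 :=
  if i % 2 = 0 ∧ j = i + 1 ∧ i < 2 * r then ((z (i / 2) : ℝ) : 𝕜)
  else if j % 2 = 0 ∧ i = j + 1 ∧ j < 2 * r then (-(z (j / 2) : ℝ) : 𝕜)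
  else 0

theorem skewNormalForm_add_two {𝕜 : Type*} [RCLike 𝕜] (r : ℕ) (σ : ℝ) (z : ℕ → ℝ) (i j : ℕ) :
    (skewNormalForm (r + 1) (fun t => if t = 0 then σ else z (t - 1)) (i + 2) (j + 2) : 𝕜) =
      skewNormalForm r z i j := by
  have hi : (i + 2) / 2 = i / 2 + 1 := by omega
  have hj : (j + 2) / 2 = j / 2 + 1 := by omega
  simp only [skewNormalForm, hi, hj, Nat.add_one_ne_zero, if_false, Nat.add_sub_cancel]
  congr 1 <;> [skip; congr 1] <;> apply propext <;> omega

namespace LinearMap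

variable {𝕜 E : Type*} [RCLike 𝕜] [NormedAddCommGroup E] [InnerProductSpace 𝕜 E]
  {B : E →ₗ[𝕜] E →ₗ[𝕜] 𝕜}

section FiniteDimensional

variable [FiniteDimensional 𝕜 E]

noncomputable def flipRiesz (B : E →ₗ[𝕜] E →ₗ[𝕜] 𝕜) : E →ₗ⋆[𝕜] E :=
  haveI := FiniteDimensional.complete 𝕜 E
  (InnerProductSpace.toDual 𝕜 E).symm.toLinearEquiv.toLinearMap ∘ₛₗ
    (LinearMap.toContinuousLinearMap.toLinearMap ∘ₗ B.flip)

theorem inner_flipRiesz (B : E →ₗ[𝕜] E →ₗ[𝕜] 𝕜) (x y : E) : ⟪B.flipRiesz y, x⟫_𝕜 = B x y := by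
  simp [flipRiesz, InnerProductSpace.toDual_symm_apply]

theorem IsAlt.inner_flipRiesz_flipRiesz (hB : B.IsAlt) (x y : E) :
    ⟪B.flipRiesz (B.flipRiesz x), y⟫_𝕜 = -⟪B.flipRiesz y, B.flipRiesz x⟫_𝕜 := by
  rw [inner_flipRiesz, inner_flipRiesz, hB.neg]

theorem IsAlt.isSymmetric_flipRiesz_comp (hB : B.IsAlt) :
    (B.flipRiesz ∘ₛₗ B.flipRiesz).IsSymmetric := by
  intro x y
  rw [← inner_conj_symm x, comp_apply, comp_apply, hB.inner_flipRiesz_flipRiesz,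
    hB.inner_flipRiesz_flipRiesz, map_neg, inner_conj_symm]

theorem IsAlt.exists_eigenvector_flipRiesz_comp (hB : B.IsAlt) (hB0 : B ≠ 0) :
    ∃ v : E, ‖v‖ = 1 ∧ B.flipRiesz v ≠ 0 ∧ ∃ μ : 𝕜, B.flipRiesz (B.flipRiesz v) = μ • v := by
  have hT := hB.isSymmetric_flipRiesz_comp
  let e := hT.eigenvectorBasis rfl
  obtain ⟨i, hi⟩ : ∃ i, B.flipRiesz (e i) ≠ 0 := by
    by_contra! h
    have ha : B.flipRiesz = 0 := e.toBasis.ext fun i => by simpa using h i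
    exact hB0 (ext₂ fun x y => by simp [← inner_flipRiesz, ha])
  exact ⟨e i, e.orthonormal.1 i, hi, _, hT.apply_eigenvectorBasis rfl i⟩

theorem IsAlt.exists_orthonormal_pair (hB : B.IsAlt) (hB0 : B ≠ 0) :
    ∃ σ : ℝ, 0 < σ ∧ ∃ u v : E, Orthonormal 𝕜 ![u, v] ∧
      ∀ x, B x u = -σ * ⟪v, x⟫_𝕜 ∧ B x v = σ * ⟪u, x⟫_𝕜 := by
  obtain ⟨v, hv, hav, μ, hμ⟩ := hB.exists_eigenvector_flipRiesz_comp hB0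
  set σ := ‖B.flipRiesz v‖
  have hσ : 0 < σ := norm_pos_iff.mpr hav
  have hσ0 : (σ : 𝕜) ≠ 0 := by exact_mod_cast hσ.ne'
  have hμσ : μ = -(σ ^ 2 : 𝕜) := by
    have h := hB.inner_flipRiesz_flipRiesz v v
    rw [hμ, inner_smul_left, inner_self_eq_norm_sq_to_K, inner_self_eq_norm_sq_to_K, hv] at h
    simpa using congrArg (starRingEnd 𝕜) h
  refine ⟨σ, hσ, (σ⁻¹ : 𝕜) • B.flipRiesz v, v, ?_, fun x => ⟨?_, ?_⟩⟩
  · simp [hv, norm_smul, σ, inner_smul_left, inner_flipRiesz, hB.self_eq_zero, hσ.ne']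
  · rw [← inner_flipRiesz, map_smulₛₗ, hμ, hμσ, inner_smul_left, inner_smul_left]
    simp only [RCLike.conj_ofReal, map_inv₀, map_neg, map_pow]
    field_simp
  · rw [← inner_flipRiesz, inner_smul_left, map_inv₀, RCLike.conj_ofReal,
      mul_inv_cancel_left₀ hσ0]

end FiniteDimensional

theorem IsAlt.apply_vecCons_vecCons (hB : B.IsAlt) {σ : ℝ} {u v : E}
    (huv : Orthonormal 𝕜 ![u, v]) (hBuv : ∀ x, B x u = -σ * ⟪v, x⟫_𝕜 ∧ B x v = σ * ⟪u, x⟫_𝕜)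
    {m r : ℕ} {z : ℕ → ℝ} {c : Fin m → E} (huc : ∀ k, ⟪u, c k⟫_𝕜 = 0)
    (hvc : ∀ k, ⟪v, c k⟫_𝕜 = 0) (hc : ∀ k l, B (c k) (c l) = skewNormalForm r z k l)
    (i j : Fin (m + 2)) :
    B (Matrix.vecCons u (Matrix.vecCons v c) i) (Matrix.vecCons u (Matrix.vecCons v c) j) =
      skewNormalForm (r + 1) (fun t => if t = 0 then σ else z (t - 1)) i j := by
  simp only [orthonormal_vecCons_iff, Fin.forall_fin_one, Matrix.cons_val_zero] at huv
  obtain ⟨hu, huv, hv, -⟩ := huv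
  have hBu (x) : B x u = -σ * ⟪v, x⟫_𝕜 := (hBuv x).1
  have hBv (x) : B x v = σ * ⟪u, x⟫_𝕜 := (hBuv x).2
  have huB (x) : B u x = σ * ⟪v, x⟫_𝕜 := by rw [← hB.neg, hBu]; ring
  have hvB (x) : B v x = -σ * ⟪u, x⟫_𝕜 := by rw [← hB.neg, hBv]; ring
  refine Fin.cases ?_ (Fin.cases ?_ fun k => ?_) i <;>
    refine Fin.cases ?_ (Fin.cases ?_ fun l => ?_) j
  on_goal 9 => exact (hc k l).trans (skewNormalForm_add_two r σ z k l).symm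
  all_goals simp [skewNormalForm, hB.self_eq_zero, huB, hvB, hBu, hBv, hu, hv, huc, hvc]

theorem IsAlt.exists_orthonormal_skewNormalForm [FiniteDimensional 𝕜 E] {n : ℕ}
    (hn : finrank 𝕜 E = n) (hB : B.IsAlt) :
    ∃ b : Fin n → E, Orthonormal 𝕜 b ∧ ∃ r, 2 * r ≤ n ∧ ∃ z : ℕ → ℝ, (∀ k, k < r → 0 < z k) ∧
      ∀ i j, B (b i) (b j) = skewNormalForm r z i j := by
  induction n using Nat.strong_induction_on generalizing E with
  | _ n ih =>
  by_cases hB0 : B = 0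
  · subst hn
    exact ⟨stdOrthonormalBasis 𝕜 E, (stdOrthonormalBasis 𝕜 E).orthonormal, 0, by simp, 0,
      by simp, by simp [hB0, skewNormalForm]⟩
  obtain ⟨σ, hσ, u, v, huv, hBuv⟩ := hB.exists_orthonormal_pair hB0
  have hK := (Submodule.span 𝕜 (Set.range ![u, v])).finrank_add_finrank_orthogonal
  rw [finrank_span_eq_card huv.linearIndependent, Fintype.card_fin] at hK
  set K := (Submodule.span 𝕜 (Set.range ![u, v]))ᗮ
  obtain rfl : finrank 𝕜 K + 2 = n := by omega
  obtain ⟨c, hc, r, hr, z, hz, hBc⟩ :=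
    ih _ (by omega) rfl (B := B.domRestrict₁₂ K K) fun x => hB x
  have huc (k) : ⟪u, (c k : E)⟫_𝕜 = 0 :=
    Submodule.inner_right_of_mem_orthogonal (Submodule.subset_span (Set.mem_range_self 0)) (c k).2
  have hvc (k) : ⟪v, (c k : E)⟫_𝕜 = 0 :=
    Submodule.inner_right_of_mem_orthogonal (Submodule.subset_span (Set.mem_range_self 1)) (c k).2
  refine ⟨Matrix.vecCons u (Matrix.vecCons v fun k => c k), ?_, r + 1, by omega,
    fun t => if t = 0 then σ else z (t - 1), ?_, hB.apply_vecCons_vecCons huv hBuv huc hvc hBc⟩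
  · simp only [orthonormal_vecCons_iff, Fin.forall_fin_one, Matrix.cons_val_zero] at huv ⊢
    exact ⟨huv.1, Fin.cases huv.2.1 huc, huv.2.2.1, hvc, hc.comp_linearIsometry K.subtypeₗᵢ⟩
  · rintro (_ | k) hk
    · simpa using hσ
    · simpa using hz k (by omega)

end LinearMap

namespace Matrix

theorem dotProduct_mulVec_self_eq_zero {ι R : Type*} [Fintype ι] [CommRing R]
    [IsAddTorsionFree R] {w : Matrix ι ι R} (hw : wᵀ = -w) (x : ι → R) : x ⬝ᵥ w *ᵥ x = 0 := by
  rw [← self_eq_neg]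
  conv_lhs => rw [dotProduct_mulVec, ← mulVec_transpose, hw, neg_mulVec, neg_dotProduct,
    dotProduct_comm]

variable {𝕜 ι : Type*} [RCLike 𝕜] [Fintype ι] [DecidableEq ι]

noncomputable def toEuclideanLinearMap₂ (w : Matrix ι ι 𝕜) :
    EuclideanSpace 𝕜 ι →ₗ[𝕜] EuclideanSpace 𝕜 ι →ₗ[𝕜] 𝕜 :=
  (toLinearMap₂' 𝕜 w).compl₁₂ (WithLp.linearEquiv 2 𝕜 (ι → 𝕜)).toLinearMap
    (WithLp.linearEquiv 2 𝕜 (ι → 𝕜)).toLinearMap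

@[simp]
theorem toEuclideanLinearMap₂_apply (w : Matrix ι ι 𝕜) (x y : EuclideanSpace 𝕜 ι) :
    w.toEuclideanLinearMap₂ x y = x.ofLp ⬝ᵥ w *ᵥ y.ofLp := by
  simp [toEuclideanLinearMap₂, toLinearMap₂'_apply']

theorem isAlt_toEuclideanLinearMap₂ {w : Matrix ι ι 𝕜} (hw : wᵀ = -w) :
    w.toEuclideanLinearMap₂.IsAlt := fun x => by
  simpa using dotProduct_mulVec_self_eq_zero hw x.ofLp

theorem mem_unitaryGroup_of_orthonormal_rows {b : ι → EuclideanSpace 𝕜 ι}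
    (hb : Orthonormal 𝕜 b) : of (fun i j => b i j) ∈ unitaryGroup ι 𝕜 := by
  rw [mem_unitaryGroup_iff]
  ext i j
  simpa [mul_apply, dotProduct, EuclideanSpace.inner_eq_star_dotProduct, one_apply, eq_comm]
    using orthonormal_iff_ite.mp hb j i

end Matrix

/-- Every complex antisymmetric matrix can be brought by a unitary
congruence `w ↦ U w Uᵀ` to a block diagonal form with 2×2 blocks `[[0,zᵢ],[-zᵢ,0]]`,
`zᵢ > 0`, followed by a zero block. -/
theorem antisymmetric_unitary_congruence_block_diagonal
    (n : ℕ) (w : Matrix (Fin n) (Fin n) ℂ) (hw : wᵀ = -w) :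
    ∃ U : Matrix (Fin n) (Fin n) ℂ, U ∈ Matrix.unitaryGroup (Fin n) ℂ ∧
      ∃ r : ℕ, 2 * r ≤ n ∧ ∃ z : ℕ → ℝ, (∀ k, k < r → 0 < z k) ∧
        ∀ i j : Fin n, (U * w * Uᵀ) i j =
          if (i : ℕ) % 2 = 0 ∧ (j : ℕ) = (i : ℕ) + 1 ∧ (i : ℕ) < 2 * r then
            ((z ((i : ℕ) / 2) : ℝ) : ℂ)
          else if (j : ℕ) % 2 = 0 ∧ (i : ℕ) = (j : ℕ) + 1 ∧ (j : ℕ) < 2 * r then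
            (-(z ((j : ℕ) / 2) : ℝ) : ℂ)
          else 0 := by
  obtain ⟨b, hb, r, hr, z, hz, hbw⟩ :=
    (isAlt_toEuclideanLinearMap₂ hw).exists_orthonormal_skewNormalForm finrank_euclideanSpace_fin
  refine ⟨_, mem_unitaryGroup_of_orthonormal_rows hb, r, hr, z, hz, fun i j => ?_⟩
  rw [mul_mul_apply, transpose_transpose]
  exact (toEuclideanLinearMap₂_apply w (b i) (b j)).symm.trans (hbw i j)
end

section
/- Let w be a complex antisymmetric 6×6 matrix. Then w has rank at most 2 if and only if for all α, β with 1 ≤ α < β ≤ 6, Σ_{i,j,k,l=1}^{6} w_{ij} w_{kl} ε^{ijklαβ} = 0. -/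
set_option maxRecDepth 8000
open Matrix Function

noncomputable def levi {n : ℕ} (f : Fin n → Fin n) : ℂ :=
  if h : Function.Bijective f then (((Equiv.Perm.sign (Equiv.ofBijective f h)) : ℤ) : ℂ)
  else 0

lemma levi_zero {n} {f : Fin n → Fin n} (h : ¬ Function.Bijective f) : levi f = 0 := dif_neg h

lemma levi_coe {n} (π : Equiv.Perm (Fin n)) : levi ⇑π = ((Equiv.Perm.sign π : ℤ) : ℂ) := by
  rw [levi, dif_pos π.bijective]
  norm_cast
  congr 1
  exact Equiv.ext fun x => rfl

lemma levi_comp {n} (h u : Fin n → Fin n) : levi (h ∘ u) = levi h * levi u := by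
  by_cases hu : Function.Bijective u
  · by_cases hh : Function.Bijective h
    · rw [levi, dif_pos (hh.comp hu), levi, dif_pos hh, levi, dif_pos hu]
      have he : Equiv.ofBijective (h ∘ u) (hh.comp hu)
          = (Equiv.ofBijective u hu).trans (Equiv.ofBijective h hh) := Equiv.ext fun x => rfl
      rw [he]
      have : (Equiv.ofBijective u hu).trans (Equiv.ofBijective h hh)
          = Equiv.ofBijective h hh * Equiv.ofBijective u hu := rfl
      rw [this, _root_.map_mul]
      push_cast
      ring
    · have : ¬ Function.Bijective (h ∘ u) := by
        intro hb
        exact hh ((Finite.surjective_iff_bijective).1 (hb.surjective.of_comp))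
      rw [levi_zero this, levi_zero hh, zero_mul]
  · have : ¬ Function.Bijective (h ∘ u) := by
      intro hb
      exact hu ((Finite.injective_iff_bijective).1 (Function.Injective.of_comp hb.injective))
    rw [levi_zero this, levi_zero hu, mul_zero]

def hat (g : Fin 4 → Fin 4) : Fin 6 → Fin 6 :=
  fun m => if h : (m : ℕ) < 4 then ⟨g ⟨m, h⟩, by omega⟩ else m

def fourEquiv : Fin 4 ≃ {m : Fin 6 // (m : ℕ) < 4} where
  toFun i := ⟨⟨i, by omega⟩, i.isLt⟩
  invFun s := ⟨s.1, s.2⟩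
  left_inv i := rfl
  right_inv s := rfl

lemma hat_bijective {g : Fin 4 → Fin 4} (hg : Function.Bijective g) :
    Function.Bijective (hat g) := by
  rw [← Finite.injective_iff_bijective]
  intro m m' h
  unfold hat at h
  by_cases h1 : (m : ℕ) < 4 <;> by_cases h2 : (m' : ℕ) < 4
  · rw [dif_pos h1, dif_pos h2] at h
    have hv := congrArg Fin.val h
    simp only [] at hv
    have h3 : g ⟨m, h1⟩ = g ⟨m', h2⟩ := Fin.ext hv
    have h4 := hg.injective h3
    have hv2 := congrArg Fin.val h4
    simp only [] at hv2
    exact Fin.ext hv2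
  · rw [dif_pos h1, dif_neg h2] at h
    exfalso
    have hv := congrArg Fin.val h
    simp only [] at hv
    have := (g ⟨m, h1⟩).isLt; omega
  · rw [dif_neg h1, dif_pos h2] at h
    exfalso
    have hv := congrArg Fin.val h
    simp only [] at hv
    have := (g ⟨m', h2⟩).isLt; omega
  · rwa [dif_neg h1, dif_neg h2] at h

lemma levi_hat (g : Fin 4 → Fin 4) : levi (hat g) = levi g := by
  by_cases hg : Function.Bijective g
  · have hb := hat_bijective hg
    rw [levi, dif_pos hb, levi, dif_pos hg]
    have : Equiv.ofBijective (hat g) hb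
        = Equiv.Perm.extendDomain (Equiv.ofBijective g hg) fourEquiv := by
      apply Equiv.ext
      intro m
      by_cases h : (m : ℕ) < 4
      · rw [Equiv.Perm.extendDomain_apply_subtype _ fourEquiv h]
        simp only [Equiv.ofBijective_apply, hat, fourEquiv]
        rw [dif_pos h]
        rfl
      · rw [Equiv.Perm.extendDomain_apply_not_subtype _ fourEquiv h]
        simp only [Equiv.ofBijective_apply, hat]
        rw [dif_neg h]
    rw [this, Equiv.Perm.sign_extendDomain]
  · have : ¬ Function.Bijective (hat g) := by
      intro hb
      apply hg
      rw [← Finite.injective_iff_bijective]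
      intro m m' h
      have : hat g ⟨m, by omega⟩ = hat g ⟨m', by omega⟩ := by
        unfold hat
        rw [dif_pos (show ((⟨(m:ℕ), by omega⟩ : Fin 6) : ℕ) < 4 from m.isLt),
          dif_pos (show ((⟨(m':ℕ), by omega⟩ : Fin 6) : ℕ) < 4 from m'.isLt)]
        exact Fin.ext (by simpa using congrArg Fin.val h)
      have h5 := hb.injective this
      have hv2 := congrArg Fin.val h5
      simp only [] at hv2
      exact Fin.ext hv2
    rw [levi_zero this, levi_zero hg]

def ext6 (f : Fin 4 → Fin 6) (α β : Fin 6) : Fin 6 → Fin 6 :=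
  fun m : Fin 6 => if h : (m : ℕ) < 4 then f ⟨m, h⟩ else if (m : ℕ) = 4 then α else β

lemma ext6_comp (e : Fin 4 → Fin 6) (g : Fin 4 → Fin 4) (α β : Fin 6) :
    ext6 (e ∘ g) α β = ext6 e α β ∘ hat g := by
  funext m
  by_cases h : (m : ℕ) < 4
  · have h1 : hat g m = ⟨((g ⟨m, h⟩ : Fin 4) : ℕ), by omega⟩ := dif_pos h
    show ext6 (e ∘ g) α β m = ext6 e α β (hat g m)
    rw [h1]
    simp only [ext6]
    rw [dif_pos h, dif_pos (show ((⟨((g ⟨m, h⟩ : Fin 4) : ℕ), by omega⟩ : Fin 6) : ℕ) < 4 from (g ⟨m, h⟩).isLt)]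
    rfl
  · have h1 : hat g m = m := dif_neg h
    show ext6 (e ∘ g) α β m = ext6 e α β (hat g m)
    rw [h1]
    simp only [ext6]
    rw [dif_neg h, dif_neg h]

lemma ext6_bijective {e : Fin 4 → Fin 6} {α β : Fin 6} (hab : α ≠ β)
    (he : Function.Injective e) (heα : ∀ m, e m ≠ α) (heβ : ∀ m, e m ≠ β) :
    Function.Bijective (ext6 e α β) := by
  rw [← Finite.injective_iff_bijective]
  intro m m' h
  unfold ext6 at h
  by_cases h1 : (m : ℕ) < 4 <;> by_cases h2 : (m' : ℕ) < 4
  · rw [dif_pos h1, dif_pos h2] at h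
    have := he h
    have hv := congrArg Fin.val this
    simp only [] at hv
    exact Fin.ext hv
  · rw [dif_pos h1, dif_neg h2] at h
    split at h
    · exact absurd h (heα _)
    · exact absurd h (heβ _)
  · rw [dif_neg h1, dif_pos h2] at h
    split at h
    · exact absurd h.symm (heα _)
    · exact absurd h.symm (heβ _)
  · rw [dif_neg h1, dif_neg h2] at h
    split at h <;> split at h
    · next ha hb => exact Fin.ext (by omega)
    · exact absurd h hab
    · exact absurd h.symm hab
    · next ha hb => exact Fin.ext (by omega)

lemma levi_ext6_ne_zero {e : Fin 4 → Fin 6} {α β : Fin 6} (hab : α ≠ β)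
    (he : Function.Injective e) (heα : ∀ m, e m ≠ α) (heβ : ∀ m, e m ≠ β) :
    levi (ext6 e α β) ≠ 0 := by
  rw [levi, dif_pos (ext6_bijective hab he heα heβ)]
  rcases Int.units_eq_one_or (Equiv.Perm.sign (Equiv.ofBijective _ (ext6_bijective hab he heα heβ))) with h | h <;>
    rw [h] <;> norm_num

lemma sum_reduce (w : Matrix (Fin 6) (Fin 6) ℂ) {α β : Fin 6} (hab : α ≠ β)
    {e : Fin 4 → Fin 6} (he : Function.Injective e)
    (heα : ∀ m, e m ≠ α) (heβ : ∀ m, e m ≠ β) :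
    ∑ f : Fin 4 → Fin 6, w (f 0) (f 1) * w (f 2) (f 3) * levi (ext6 f α β)
      = ∑ g : Fin 4 → Fin 4,
        w (e (g 0)) (e (g 1)) * w (e (g 2)) (e (g 3)) * levi (ext6 (e ∘ g) α β) := by
  classical
  have hinj : ∀ g₁ ∈ (Finset.univ : Finset (Fin 4 → Fin 4)), ∀ g₂ ∈ Finset.univ,
      e ∘ g₁ = e ∘ g₂ → g₁ = g₂ := by
    intro g₁ _ g₂ _ h
    funext m
    exact he (congrFun h m)
  have h2 := Finset.sum_image (s := Finset.univ) (g := fun g : Fin 4 → Fin 4 => e ∘ g)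
    (f := fun f => w (f 0) (f 1) * w (f 2) (f 3) * levi (ext6 f α β)) hinj
  rw [show (∑ g : Fin 4 → Fin 4,
        w (e (g 0)) (e (g 1)) * w (e (g 2)) (e (g 3)) * levi (ext6 (e ∘ g) α β))
      = ∑ g : Fin 4 → Fin 4,
        w ((e ∘ g) 0) ((e ∘ g) 1) * w ((e ∘ g) 2) ((e ∘ g) 3) * levi (ext6 (e ∘ g) α β) from
      Finset.sum_congr rfl (fun g _ => rfl),
    ← h2]
  refine (Finset.sum_subset (Finset.subset_univ _) ?_).symm
  intro f _ hf
  have hnb : ¬ Function.Bijective (ext6 f α β) := by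
    intro hb
    -- f is injective
    have hfinj : Function.Injective f := by
      intro m m' h
      have : ext6 f α β ⟨m, by omega⟩ = ext6 f α β ⟨m', by omega⟩ := by
        unfold ext6
        rw [dif_pos (show ((⟨(m:ℕ), by omega⟩ : Fin 6) : ℕ) < 4 from m.isLt),
          dif_pos (show ((⟨(m':ℕ), by omega⟩ : Fin 6) : ℕ) < 4 from m'.isLt)]
        exact h
      have h5 := hb.injective this
      have hv := congrArg Fin.val h5
      simp only [] at hv
      exact Fin.ext hv
    -- f avoids α
    have hfα : ∀ m, f m ≠ α := by
      intro m hm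
      have h4 : ext6 f α β ⟨m, by omega⟩ = ext6 f α β ⟨4, by omega⟩ := by
        unfold ext6
        rw [dif_pos (show ((⟨(m:ℕ), by omega⟩ : Fin 6) : ℕ) < 4 from m.isLt), dif_neg (by norm_num),
          if_pos rfl]
        exact hm
      have := congrArg Fin.val (hb.injective h4)
      simp only [] at this
      have := m.isLt; omega
    have hfβ : ∀ m, f m ≠ β := by
      intro m hm
      have h4 : ext6 f α β ⟨m, by omega⟩ = ext6 f α β ⟨5, by omega⟩ := by
        unfold ext6
        rw [dif_pos (show ((⟨(m:ℕ), by omega⟩ : Fin 6) : ℕ) < 4 from m.isLt), dif_neg (by norm_num),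
          if_neg (by norm_num)]
        exact hm
      have := congrArg Fin.val (hb.injective h4)
      simp only [] at this
      have := m.isLt; omega
    -- range of e equals complement of {α, β}
    have hsub : Finset.image e Finset.univ ⊆ ({α, β} : Finset (Fin 6))ᶜ := by
      intro y hy
      rcases Finset.mem_image.1 hy with ⟨m, _, rfl⟩
      simp [heα m, heβ m]
    have hcard2 : ({α, β} : Finset (Fin 6)).card = 2 := by
      rw [Finset.card_insert_of_notMem (by simp [hab]), Finset.card_singleton]
    have hcardc : (({α, β} : Finset (Fin 6))ᶜ).card = 4 := by
      rw [Finset.card_compl, hcard2]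
      rfl
    have hcarde : (Finset.image e Finset.univ).card = 4 := by
      rw [Finset.card_image_of_injective _ he, Finset.card_univ]
      rfl
    have heq : Finset.image e Finset.univ = ({α, β} : Finset (Fin 6))ᶜ :=
      Finset.eq_of_subset_of_card_le hsub (by omega)
    -- build g
    have hex : ∀ m, ∃ k, e k = f m := by
      intro m
      have : f m ∈ ({α, β} : Finset (Fin 6))ᶜ := by simp [hfα m, hfβ m]
      rw [← heq] at this
      rcases Finset.mem_image.1 this with ⟨k, _, hk⟩
      exact ⟨k, hk⟩
    apply hf
    refine Finset.mem_image.2 ⟨fun m => (hex m).choose, Finset.mem_univ _, ?_⟩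
    funext m
    exact (hex m).choose_spec
  rw [levi_zero hnb, mul_zero]

def quadEquiv (X : Type*) : (Fin 4 → X) ≃ X × X × X × X where
  toFun f := (f 0, f 1, f 2, f 3)
  invFun x := ![x.1, x.2.1, x.2.2.1, x.2.2.2]
  left_inv f := funext fun m => by fin_cases m <;> rfl
  right_inv x := rfl
lemma sum_quad {X M : Type*} [Fintype X] [DecidableEq X] [AddCommMonoid M] (F : (Fin 4 → X) → M) :
    ∑ f : Fin 4 → X, F f = ∑ a : X, ∑ b, ∑ c, ∑ d, F ![a,b,c,d] := by
  rw [← Equiv.sum_comp (quadEquiv X).symm F]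
  simp only [Fintype.sum_prod_type]
  rfl
@[simp] lemma lv_0000 : levi (![0,0,0,0] : Fin 4 → Fin 4) = 0 := levi_zero (by decide)
@[simp] lemma lv_0001 : levi (![0,0,0,1] : Fin 4 → Fin 4) = 0 := levi_zero (by decide)
@[simp] lemma lv_0002 : levi (![0,0,0,2] : Fin 4 → Fin 4) = 0 := levi_zero (by decide)
@[simp] lemma lv_0003 : levi (![0,0,0,3] : Fin 4 → Fin 4) = 0 := levi_zero (by decide)
@[simp] lemma lv_0010 : levi (![0,0,1,0] : Fin 4 → Fin 4) = 0 := levi_zero (by decide)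
@[simp] lemma lv_0011 : levi (![0,0,1,1] : Fin 4 → Fin 4) = 0 := levi_zero (by decide)
@[simp] lemma lv_0012 : levi (![0,0,1,2] : Fin 4 → Fin 4) = 0 := levi_zero (by decide)
@[simp] lemma lv_0013 : levi (![0,0,1,3] : Fin 4 → Fin 4) = 0 := levi_zero (by decide)
@[simp] lemma lv_0020 : levi (![0,0,2,0] : Fin 4 → Fin 4) = 0 := levi_zero (by decide)
@[simp] lemma lv_0021 : levi (![0,0,2,1] : Fin 4 → Fin 4) = 0 := levi_zero (by decide)
@[simp] lemma lv_0022 : levi (![0,0,2,2] : Fin 4 → Fin 4) = 0 := levi_zero (by decide)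
@[simp] lemma lv_0023 : levi (![0,0,2,3] : Fin 4 → Fin 4) = 0 := levi_zero (by decide)
@[simp] lemma lv_0030 : levi (![0,0,3,0] : Fin 4 → Fin 4) = 0 := levi_zero (by decide)
@[simp] lemma lv_0031 : levi (![0,0,3,1] : Fin 4 → Fin 4) = 0 := levi_zero (by decide)
@[simp] lemma lv_0032 : levi (![0,0,3,2] : Fin 4 → Fin 4) = 0 := levi_zero (by decide)
@[simp] lemma lv_0033 : levi (![0,0,3,3] : Fin 4 → Fin 4) = 0 := levi_zero (by decide)
@[simp] lemma lv_0100 : levi (![0,1,0,0] : Fin 4 → Fin 4) = 0 := levi_zero (by decide)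
@[simp] lemma lv_0101 : levi (![0,1,0,1] : Fin 4 → Fin 4) = 0 := levi_zero (by decide)
@[simp] lemma lv_0102 : levi (![0,1,0,2] : Fin 4 → Fin 4) = 0 := levi_zero (by decide)
@[simp] lemma lv_0103 : levi (![0,1,0,3] : Fin 4 → Fin 4) = 0 := levi_zero (by decide)
@[simp] lemma lv_0110 : levi (![0,1,1,0] : Fin 4 → Fin 4) = 0 := levi_zero (by decide)
@[simp] lemma lv_0111 : levi (![0,1,1,1] : Fin 4 → Fin 4) = 0 := levi_zero (by decide)
@[simp] lemma lv_0112 : levi (![0,1,1,2] : Fin 4 → Fin 4) = 0 := levi_zero (by decide)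
@[simp] lemma lv_0113 : levi (![0,1,1,3] : Fin 4 → Fin 4) = 0 := levi_zero (by decide)
@[simp] lemma lv_0120 : levi (![0,1,2,0] : Fin 4 → Fin 4) = 0 := levi_zero (by decide)
@[simp] lemma lv_0121 : levi (![0,1,2,1] : Fin 4 → Fin 4) = 0 := levi_zero (by decide)
@[simp] lemma lv_0122 : levi (![0,1,2,2] : Fin 4 → Fin 4) = 0 := levi_zero (by decide)
@[simp] lemma lv_0123 : levi (![0,1,2,3] : Fin 4 → Fin 4) = 1 := by
  rw [show (![0,1,2,3] : Fin 4 → Fin 4) = ⇑(⟨![0,1,2,3], ![0,1,2,3], by decide, by decide⟩ : Equiv.Perm (Fin 4)) from rfl, levi_coe,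
    show Equiv.Perm.sign (⟨![0,1,2,3], ![0,1,2,3], by decide, by decide⟩ : Equiv.Perm (Fin 4)) = 1 from by decide]
  norm_num
@[simp] lemma lv_0130 : levi (![0,1,3,0] : Fin 4 → Fin 4) = 0 := levi_zero (by decide)
@[simp] lemma lv_0131 : levi (![0,1,3,1] : Fin 4 → Fin 4) = 0 := levi_zero (by decide)
@[simp] lemma lv_0132 : levi (![0,1,3,2] : Fin 4 → Fin 4) = -1 := by
  rw [show (![0,1,3,2] : Fin 4 → Fin 4) = ⇑(⟨![0,1,3,2], ![0,1,3,2], by decide, by decide⟩ : Equiv.Perm (Fin 4)) from rfl, levi_coe,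
    show Equiv.Perm.sign (⟨![0,1,3,2], ![0,1,3,2], by decide, by decide⟩ : Equiv.Perm (Fin 4)) = -1 from by decide]
  norm_num
@[simp] lemma lv_0133 : levi (![0,1,3,3] : Fin 4 → Fin 4) = 0 := levi_zero (by decide)
@[simp] lemma lv_0200 : levi (![0,2,0,0] : Fin 4 → Fin 4) = 0 := levi_zero (by decide)
@[simp] lemma lv_0201 : levi (![0,2,0,1] : Fin 4 → Fin 4) = 0 := levi_zero (by decide)
@[simp] lemma lv_0202 : levi (![0,2,0,2] : Fin 4 → Fin 4) = 0 := levi_zero (by decide)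
@[simp] lemma lv_0203 : levi (![0,2,0,3] : Fin 4 → Fin 4) = 0 := levi_zero (by decide)
@[simp] lemma lv_0210 : levi (![0,2,1,0] : Fin 4 → Fin 4) = 0 := levi_zero (by decide)
@[simp] lemma lv_0211 : levi (![0,2,1,1] : Fin 4 → Fin 4) = 0 := levi_zero (by decide)
@[simp] lemma lv_0212 : levi (![0,2,1,2] : Fin 4 → Fin 4) = 0 := levi_zero (by decide)
@[simp] lemma lv_0213 : levi (![0,2,1,3] : Fin 4 → Fin 4) = -1 := by
  rw [show (![0,2,1,3] : Fin 4 → Fin 4) = ⇑(⟨![0,2,1,3], ![0,2,1,3], by decide, by decide⟩ : Equiv.Perm (Fin 4)) from rfl, levi_coe,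
    show Equiv.Perm.sign (⟨![0,2,1,3], ![0,2,1,3], by decide, by decide⟩ : Equiv.Perm (Fin 4)) = -1 from by decide]
  norm_num
@[simp] lemma lv_0220 : levi (![0,2,2,0] : Fin 4 → Fin 4) = 0 := levi_zero (by decide)
@[simp] lemma lv_0221 : levi (![0,2,2,1] : Fin 4 → Fin 4) = 0 := levi_zero (by decide)
@[simp] lemma lv_0222 : levi (![0,2,2,2] : Fin 4 → Fin 4) = 0 := levi_zero (by decide)
@[simp] lemma lv_0223 : levi (![0,2,2,3] : Fin 4 → Fin 4) = 0 := levi_zero (by decide)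
@[simp] lemma lv_0230 : levi (![0,2,3,0] : Fin 4 → Fin 4) = 0 := levi_zero (by decide)
@[simp] lemma lv_0231 : levi (![0,2,3,1] : Fin 4 → Fin 4) = 1 := by
  rw [show (![0,2,3,1] : Fin 4 → Fin 4) = ⇑(⟨![0,2,3,1], ![0,3,1,2], by decide, by decide⟩ : Equiv.Perm (Fin 4)) from rfl, levi_coe,
    show Equiv.Perm.sign (⟨![0,2,3,1], ![0,3,1,2], by decide, by decide⟩ : Equiv.Perm (Fin 4)) = 1 from by decide]
  norm_num
@[simp] lemma lv_0232 : levi (![0,2,3,2] : Fin 4 → Fin 4) = 0 := levi_zero (by decide)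
@[simp] lemma lv_0233 : levi (![0,2,3,3] : Fin 4 → Fin 4) = 0 := levi_zero (by decide)
@[simp] lemma lv_0300 : levi (![0,3,0,0] : Fin 4 → Fin 4) = 0 := levi_zero (by decide)
@[simp] lemma lv_0301 : levi (![0,3,0,1] : Fin 4 → Fin 4) = 0 := levi_zero (by decide)
@[simp] lemma lv_0302 : levi (![0,3,0,2] : Fin 4 → Fin 4) = 0 := levi_zero (by decide)
@[simp] lemma lv_0303 : levi (![0,3,0,3] : Fin 4 → Fin 4) = 0 := levi_zero (by decide)
@[simp] lemma lv_0310 : levi (![0,3,1,0] : Fin 4 → Fin 4) = 0 := levi_zero (by decide)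
@[simp] lemma lv_0311 : levi (![0,3,1,1] : Fin 4 → Fin 4) = 0 := levi_zero (by decide)
@[simp] lemma lv_0312 : levi (![0,3,1,2] : Fin 4 → Fin 4) = 1 := by
  rw [show (![0,3,1,2] : Fin 4 → Fin 4) = ⇑(⟨![0,3,1,2], ![0,2,3,1], by decide, by decide⟩ : Equiv.Perm (Fin 4)) from rfl, levi_coe,
    show Equiv.Perm.sign (⟨![0,3,1,2], ![0,2,3,1], by decide, by decide⟩ : Equiv.Perm (Fin 4)) = 1 from by decide]
  norm_num
@[simp] lemma lv_0313 : levi (![0,3,1,3] : Fin 4 → Fin 4) = 0 := levi_zero (by decide)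
@[simp] lemma lv_0320 : levi (![0,3,2,0] : Fin 4 → Fin 4) = 0 := levi_zero (by decide)
@[simp] lemma lv_0321 : levi (![0,3,2,1] : Fin 4 → Fin 4) = -1 := by
  rw [show (![0,3,2,1] : Fin 4 → Fin 4) = ⇑(⟨![0,3,2,1], ![0,3,2,1], by decide, by decide⟩ : Equiv.Perm (Fin 4)) from rfl, levi_coe,
    show Equiv.Perm.sign (⟨![0,3,2,1], ![0,3,2,1], by decide, by decide⟩ : Equiv.Perm (Fin 4)) = -1 from by decide]
  norm_num
@[simp] lemma lv_0322 : levi (![0,3,2,2] : Fin 4 → Fin 4) = 0 := levi_zero (by decide)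
@[simp] lemma lv_0323 : levi (![0,3,2,3] : Fin 4 → Fin 4) = 0 := levi_zero (by decide)
@[simp] lemma lv_0330 : levi (![0,3,3,0] : Fin 4 → Fin 4) = 0 := levi_zero (by decide)
@[simp] lemma lv_0331 : levi (![0,3,3,1] : Fin 4 → Fin 4) = 0 := levi_zero (by decide)
@[simp] lemma lv_0332 : levi (![0,3,3,2] : Fin 4 → Fin 4) = 0 := levi_zero (by decide)
@[simp] lemma lv_0333 : levi (![0,3,3,3] : Fin 4 → Fin 4) = 0 := levi_zero (by decide)
@[simp] lemma lv_1000 : levi (![1,0,0,0] : Fin 4 → Fin 4) = 0 := levi_zero (by decide)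
@[simp] lemma lv_1001 : levi (![1,0,0,1] : Fin 4 → Fin 4) = 0 := levi_zero (by decide)
@[simp] lemma lv_1002 : levi (![1,0,0,2] : Fin 4 → Fin 4) = 0 := levi_zero (by decide)
@[simp] lemma lv_1003 : levi (![1,0,0,3] : Fin 4 → Fin 4) = 0 := levi_zero (by decide)
@[simp] lemma lv_1010 : levi (![1,0,1,0] : Fin 4 → Fin 4) = 0 := levi_zero (by decide)
@[simp] lemma lv_1011 : levi (![1,0,1,1] : Fin 4 → Fin 4) = 0 := levi_zero (by decide)
@[simp] lemma lv_1012 : levi (![1,0,1,2] : Fin 4 → Fin 4) = 0 := levi_zero (by decide)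
@[simp] lemma lv_1013 : levi (![1,0,1,3] : Fin 4 → Fin 4) = 0 := levi_zero (by decide)
@[simp] lemma lv_1020 : levi (![1,0,2,0] : Fin 4 → Fin 4) = 0 := levi_zero (by decide)
@[simp] lemma lv_1021 : levi (![1,0,2,1] : Fin 4 → Fin 4) = 0 := levi_zero (by decide)
@[simp] lemma lv_1022 : levi (![1,0,2,2] : Fin 4 → Fin 4) = 0 := levi_zero (by decide)
@[simp] lemma lv_1023 : levi (![1,0,2,3] : Fin 4 → Fin 4) = -1 := by
  rw [show (![1,0,2,3] : Fin 4 → Fin 4) = ⇑(⟨![1,0,2,3], ![1,0,2,3], by decide, by decide⟩ : Equiv.Perm (Fin 4)) from rfl, levi_coe,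
    show Equiv.Perm.sign (⟨![1,0,2,3], ![1,0,2,3], by decide, by decide⟩ : Equiv.Perm (Fin 4)) = -1 from by decide]
  norm_num
@[simp] lemma lv_1030 : levi (![1,0,3,0] : Fin 4 → Fin 4) = 0 := levi_zero (by decide)
@[simp] lemma lv_1031 : levi (![1,0,3,1] : Fin 4 → Fin 4) = 0 := levi_zero (by decide)
@[simp] lemma lv_1032 : levi (![1,0,3,2] : Fin 4 → Fin 4) = 1 := by
  rw [show (![1,0,3,2] : Fin 4 → Fin 4) = ⇑(⟨![1,0,3,2], ![1,0,3,2], by decide, by decide⟩ : Equiv.Perm (Fin 4)) from rfl, levi_coe,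
    show Equiv.Perm.sign (⟨![1,0,3,2], ![1,0,3,2], by decide, by decide⟩ : Equiv.Perm (Fin 4)) = 1 from by decide]
  norm_num
@[simp] lemma lv_1033 : levi (![1,0,3,3] : Fin 4 → Fin 4) = 0 := levi_zero (by decide)
@[simp] lemma lv_1100 : levi (![1,1,0,0] : Fin 4 → Fin 4) = 0 := levi_zero (by decide)
@[simp] lemma lv_1101 : levi (![1,1,0,1] : Fin 4 → Fin 4) = 0 := levi_zero (by decide)
@[simp] lemma lv_1102 : levi (![1,1,0,2] : Fin 4 → Fin 4) = 0 := levi_zero (by decide)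
@[simp] lemma lv_1103 : levi (![1,1,0,3] : Fin 4 → Fin 4) = 0 := levi_zero (by decide)
@[simp] lemma lv_1110 : levi (![1,1,1,0] : Fin 4 → Fin 4) = 0 := levi_zero (by decide)
@[simp] lemma lv_1111 : levi (![1,1,1,1] : Fin 4 → Fin 4) = 0 := levi_zero (by decide)
@[simp] lemma lv_1112 : levi (![1,1,1,2] : Fin 4 → Fin 4) = 0 := levi_zero (by decide)
@[simp] lemma lv_1113 : levi (![1,1,1,3] : Fin 4 → Fin 4) = 0 := levi_zero (by decide)
@[simp] lemma lv_1120 : levi (![1,1,2,0] : Fin 4 → Fin 4) = 0 := levi_zero (by decide)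
@[simp] lemma lv_1121 : levi (![1,1,2,1] : Fin 4 → Fin 4) = 0 := levi_zero (by decide)
@[simp] lemma lv_1122 : levi (![1,1,2,2] : Fin 4 → Fin 4) = 0 := levi_zero (by decide)
@[simp] lemma lv_1123 : levi (![1,1,2,3] : Fin 4 → Fin 4) = 0 := levi_zero (by decide)
@[simp] lemma lv_1130 : levi (![1,1,3,0] : Fin 4 → Fin 4) = 0 := levi_zero (by decide)
@[simp] lemma lv_1131 : levi (![1,1,3,1] : Fin 4 → Fin 4) = 0 := levi_zero (by decide)
@[simp] lemma lv_1132 : levi (![1,1,3,2] : Fin 4 → Fin 4) = 0 := levi_zero (by decide)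
@[simp] lemma lv_1133 : levi (![1,1,3,3] : Fin 4 → Fin 4) = 0 := levi_zero (by decide)
@[simp] lemma lv_1200 : levi (![1,2,0,0] : Fin 4 → Fin 4) = 0 := levi_zero (by decide)
@[simp] lemma lv_1201 : levi (![1,2,0,1] : Fin 4 → Fin 4) = 0 := levi_zero (by decide)
@[simp] lemma lv_1202 : levi (![1,2,0,2] : Fin 4 → Fin 4) = 0 := levi_zero (by decide)
@[simp] lemma lv_1203 : levi (![1,2,0,3] : Fin 4 → Fin 4) = 1 := by
  rw [show (![1,2,0,3] : Fin 4 → Fin 4) = ⇑(⟨![1,2,0,3], ![2,0,1,3], by decide, by decide⟩ : Equiv.Perm (Fin 4)) from rfl, levi_coe,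
    show Equiv.Perm.sign (⟨![1,2,0,3], ![2,0,1,3], by decide, by decide⟩ : Equiv.Perm (Fin 4)) = 1 from by decide]
  norm_num
@[simp] lemma lv_1210 : levi (![1,2,1,0] : Fin 4 → Fin 4) = 0 := levi_zero (by decide)
@[simp] lemma lv_1211 : levi (![1,2,1,1] : Fin 4 → Fin 4) = 0 := levi_zero (by decide)
@[simp] lemma lv_1212 : levi (![1,2,1,2] : Fin 4 → Fin 4) = 0 := levi_zero (by decide)
@[simp] lemma lv_1213 : levi (![1,2,1,3] : Fin 4 → Fin 4) = 0 := levi_zero (by decide)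
@[simp] lemma lv_1220 : levi (![1,2,2,0] : Fin 4 → Fin 4) = 0 := levi_zero (by decide)
@[simp] lemma lv_1221 : levi (![1,2,2,1] : Fin 4 → Fin 4) = 0 := levi_zero (by decide)
@[simp] lemma lv_1222 : levi (![1,2,2,2] : Fin 4 → Fin 4) = 0 := levi_zero (by decide)
@[simp] lemma lv_1223 : levi (![1,2,2,3] : Fin 4 → Fin 4) = 0 := levi_zero (by decide)
@[simp] lemma lv_1230 : levi (![1,2,3,0] : Fin 4 → Fin 4) = -1 := by
  rw [show (![1,2,3,0] : Fin 4 → Fin 4) = ⇑(⟨![1,2,3,0], ![3,0,1,2], by decide, by decide⟩ : Equiv.Perm (Fin 4)) from rfl, levi_coe,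
    show Equiv.Perm.sign (⟨![1,2,3,0], ![3,0,1,2], by decide, by decide⟩ : Equiv.Perm (Fin 4)) = -1 from by decide]
  norm_num
@[simp] lemma lv_1231 : levi (![1,2,3,1] : Fin 4 → Fin 4) = 0 := levi_zero (by decide)
@[simp] lemma lv_1232 : levi (![1,2,3,2] : Fin 4 → Fin 4) = 0 := levi_zero (by decide)
@[simp] lemma lv_1233 : levi (![1,2,3,3] : Fin 4 → Fin 4) = 0 := levi_zero (by decide)
@[simp] lemma lv_1300 : levi (![1,3,0,0] : Fin 4 → Fin 4) = 0 := levi_zero (by decide)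
@[simp] lemma lv_1301 : levi (![1,3,0,1] : Fin 4 → Fin 4) = 0 := levi_zero (by decide)
@[simp] lemma lv_1302 : levi (![1,3,0,2] : Fin 4 → Fin 4) = -1 := by
  rw [show (![1,3,0,2] : Fin 4 → Fin 4) = ⇑(⟨![1,3,0,2], ![2,0,3,1], by decide, by decide⟩ : Equiv.Perm (Fin 4)) from rfl, levi_coe,
    show Equiv.Perm.sign (⟨![1,3,0,2], ![2,0,3,1], by decide, by decide⟩ : Equiv.Perm (Fin 4)) = -1 from by decide]
  norm_num
@[simp] lemma lv_1303 : levi (![1,3,0,3] : Fin 4 → Fin 4) = 0 := levi_zero (by decide)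
@[simp] lemma lv_1310 : levi (![1,3,1,0] : Fin 4 → Fin 4) = 0 := levi_zero (by decide)
@[simp] lemma lv_1311 : levi (![1,3,1,1] : Fin 4 → Fin 4) = 0 := levi_zero (by decide)
@[simp] lemma lv_1312 : levi (![1,3,1,2] : Fin 4 → Fin 4) = 0 := levi_zero (by decide)
@[simp] lemma lv_1313 : levi (![1,3,1,3] : Fin 4 → Fin 4) = 0 := levi_zero (by decide)
@[simp] lemma lv_1320 : levi (![1,3,2,0] : Fin 4 → Fin 4) = 1 := by
  rw [show (![1,3,2,0] : Fin 4 → Fin 4) = ⇑(⟨![1,3,2,0], ![3,0,2,1], by decide, by decide⟩ : Equiv.Perm (Fin 4)) from rfl, levi_coe,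
    show Equiv.Perm.sign (⟨![1,3,2,0], ![3,0,2,1], by decide, by decide⟩ : Equiv.Perm (Fin 4)) = 1 from by decide]
  norm_num
@[simp] lemma lv_1321 : levi (![1,3,2,1] : Fin 4 → Fin 4) = 0 := levi_zero (by decide)
@[simp] lemma lv_1322 : levi (![1,3,2,2] : Fin 4 → Fin 4) = 0 := levi_zero (by decide)
@[simp] lemma lv_1323 : levi (![1,3,2,3] : Fin 4 → Fin 4) = 0 := levi_zero (by decide)
@[simp] lemma lv_1330 : levi (![1,3,3,0] : Fin 4 → Fin 4) = 0 := levi_zero (by decide)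
@[simp] lemma lv_1331 : levi (![1,3,3,1] : Fin 4 → Fin 4) = 0 := levi_zero (by decide)
@[simp] lemma lv_1332 : levi (![1,3,3,2] : Fin 4 → Fin 4) = 0 := levi_zero (by decide)
@[simp] lemma lv_1333 : levi (![1,3,3,3] : Fin 4 → Fin 4) = 0 := levi_zero (by decide)
@[simp] lemma lv_2000 : levi (![2,0,0,0] : Fin 4 → Fin 4) = 0 := levi_zero (by decide)
@[simp] lemma lv_2001 : levi (![2,0,0,1] : Fin 4 → Fin 4) = 0 := levi_zero (by decide)
@[simp] lemma lv_2002 : levi (![2,0,0,2] : Fin 4 → Fin 4) = 0 := levi_zero (by decide)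
@[simp] lemma lv_2003 : levi (![2,0,0,3] : Fin 4 → Fin 4) = 0 := levi_zero (by decide)
@[simp] lemma lv_2010 : levi (![2,0,1,0] : Fin 4 → Fin 4) = 0 := levi_zero (by decide)
@[simp] lemma lv_2011 : levi (![2,0,1,1] : Fin 4 → Fin 4) = 0 := levi_zero (by decide)
@[simp] lemma lv_2012 : levi (![2,0,1,2] : Fin 4 → Fin 4) = 0 := levi_zero (by decide)
@[simp] lemma lv_2013 : levi (![2,0,1,3] : Fin 4 → Fin 4) = 1 := by
  rw [show (![2,0,1,3] : Fin 4 → Fin 4) = ⇑(⟨![2,0,1,3], ![1,2,0,3], by decide, by decide⟩ : Equiv.Perm (Fin 4)) from rfl, levi_coe,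
    show Equiv.Perm.sign (⟨![2,0,1,3], ![1,2,0,3], by decide, by decide⟩ : Equiv.Perm (Fin 4)) = 1 from by decide]
  norm_num
@[simp] lemma lv_2020 : levi (![2,0,2,0] : Fin 4 → Fin 4) = 0 := levi_zero (by decide)
@[simp] lemma lv_2021 : levi (![2,0,2,1] : Fin 4 → Fin 4) = 0 := levi_zero (by decide)
@[simp] lemma lv_2022 : levi (![2,0,2,2] : Fin 4 → Fin 4) = 0 := levi_zero (by decide)
@[simp] lemma lv_2023 : levi (![2,0,2,3] : Fin 4 → Fin 4) = 0 := levi_zero (by decide)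
@[simp] lemma lv_2030 : levi (![2,0,3,0] : Fin 4 → Fin 4) = 0 := levi_zero (by decide)
@[simp] lemma lv_2031 : levi (![2,0,3,1] : Fin 4 → Fin 4) = -1 := by
  rw [show (![2,0,3,1] : Fin 4 → Fin 4) = ⇑(⟨![2,0,3,1], ![1,3,0,2], by decide, by decide⟩ : Equiv.Perm (Fin 4)) from rfl, levi_coe,
    show Equiv.Perm.sign (⟨![2,0,3,1], ![1,3,0,2], by decide, by decide⟩ : Equiv.Perm (Fin 4)) = -1 from by decide]
  norm_num
@[simp] lemma lv_2032 : levi (![2,0,3,2] : Fin 4 → Fin 4) = 0 := levi_zero (by decide)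
@[simp] lemma lv_2033 : levi (![2,0,3,3] : Fin 4 → Fin 4) = 0 := levi_zero (by decide)
@[simp] lemma lv_2100 : levi (![2,1,0,0] : Fin 4 → Fin 4) = 0 := levi_zero (by decide)
@[simp] lemma lv_2101 : levi (![2,1,0,1] : Fin 4 → Fin 4) = 0 := levi_zero (by decide)
@[simp] lemma lv_2102 : levi (![2,1,0,2] : Fin 4 → Fin 4) = 0 := levi_zero (by decide)
@[simp] lemma lv_2103 : levi (![2,1,0,3] : Fin 4 → Fin 4) = -1 := by
  rw [show (![2,1,0,3] : Fin 4 → Fin 4) = ⇑(⟨![2,1,0,3], ![2,1,0,3], by decide, by decide⟩ : Equiv.Perm (Fin 4)) from rfl, levi_coe,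
    show Equiv.Perm.sign (⟨![2,1,0,3], ![2,1,0,3], by decide, by decide⟩ : Equiv.Perm (Fin 4)) = -1 from by decide]
  norm_num
@[simp] lemma lv_2110 : levi (![2,1,1,0] : Fin 4 → Fin 4) = 0 := levi_zero (by decide)
@[simp] lemma lv_2111 : levi (![2,1,1,1] : Fin 4 → Fin 4) = 0 := levi_zero (by decide)
@[simp] lemma lv_2112 : levi (![2,1,1,2] : Fin 4 → Fin 4) = 0 := levi_zero (by decide)
@[simp] lemma lv_2113 : levi (![2,1,1,3] : Fin 4 → Fin 4) = 0 := levi_zero (by decide)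
@[simp] lemma lv_2120 : levi (![2,1,2,0] : Fin 4 → Fin 4) = 0 := levi_zero (by decide)
@[simp] lemma lv_2121 : levi (![2,1,2,1] : Fin 4 → Fin 4) = 0 := levi_zero (by decide)
@[simp] lemma lv_2122 : levi (![2,1,2,2] : Fin 4 → Fin 4) = 0 := levi_zero (by decide)
@[simp] lemma lv_2123 : levi (![2,1,2,3] : Fin 4 → Fin 4) = 0 := levi_zero (by decide)
@[simp] lemma lv_2130 : levi (![2,1,3,0] : Fin 4 → Fin 4) = 1 := by
  rw [show (![2,1,3,0] : Fin 4 → Fin 4) = ⇑(⟨![2,1,3,0], ![3,1,0,2], by decide, by decide⟩ : Equiv.Perm (Fin 4)) from rfl, levi_coe,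
    show Equiv.Perm.sign (⟨![2,1,3,0], ![3,1,0,2], by decide, by decide⟩ : Equiv.Perm (Fin 4)) = 1 from by decide]
  norm_num
@[simp] lemma lv_2131 : levi (![2,1,3,1] : Fin 4 → Fin 4) = 0 := levi_zero (by decide)
@[simp] lemma lv_2132 : levi (![2,1,3,2] : Fin 4 → Fin 4) = 0 := levi_zero (by decide)
@[simp] lemma lv_2133 : levi (![2,1,3,3] : Fin 4 → Fin 4) = 0 := levi_zero (by decide)
@[simp] lemma lv_2200 : levi (![2,2,0,0] : Fin 4 → Fin 4) = 0 := levi_zero (by decide)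
@[simp] lemma lv_2201 : levi (![2,2,0,1] : Fin 4 → Fin 4) = 0 := levi_zero (by decide)
@[simp] lemma lv_2202 : levi (![2,2,0,2] : Fin 4 → Fin 4) = 0 := levi_zero (by decide)
@[simp] lemma lv_2203 : levi (![2,2,0,3] : Fin 4 → Fin 4) = 0 := levi_zero (by decide)
@[simp] lemma lv_2210 : levi (![2,2,1,0] : Fin 4 → Fin 4) = 0 := levi_zero (by decide)
@[simp] lemma lv_2211 : levi (![2,2,1,1] : Fin 4 → Fin 4) = 0 := levi_zero (by decide)
@[simp] lemma lv_2212 : levi (![2,2,1,2] : Fin 4 → Fin 4) = 0 := levi_zero (by decide)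
@[simp] lemma lv_2213 : levi (![2,2,1,3] : Fin 4 → Fin 4) = 0 := levi_zero (by decide)
@[simp] lemma lv_2220 : levi (![2,2,2,0] : Fin 4 → Fin 4) = 0 := levi_zero (by decide)
@[simp] lemma lv_2221 : levi (![2,2,2,1] : Fin 4 → Fin 4) = 0 := levi_zero (by decide)
@[simp] lemma lv_2222 : levi (![2,2,2,2] : Fin 4 → Fin 4) = 0 := levi_zero (by decide)
@[simp] lemma lv_2223 : levi (![2,2,2,3] : Fin 4 → Fin 4) = 0 := levi_zero (by decide)
@[simp] lemma lv_2230 : levi (![2,2,3,0] : Fin 4 → Fin 4) = 0 := levi_zero (by decide)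
@[simp] lemma lv_2231 : levi (![2,2,3,1] : Fin 4 → Fin 4) = 0 := levi_zero (by decide)
@[simp] lemma lv_2232 : levi (![2,2,3,2] : Fin 4 → Fin 4) = 0 := levi_zero (by decide)
@[simp] lemma lv_2233 : levi (![2,2,3,3] : Fin 4 → Fin 4) = 0 := levi_zero (by decide)
@[simp] lemma lv_2300 : levi (![2,3,0,0] : Fin 4 → Fin 4) = 0 := levi_zero (by decide)
@[simp] lemma lv_2301 : levi (![2,3,0,1] : Fin 4 → Fin 4) = 1 := by
  rw [show (![2,3,0,1] : Fin 4 → Fin 4) = ⇑(⟨![2,3,0,1], ![2,3,0,1], by decide, by decide⟩ : Equiv.Perm (Fin 4)) from rfl, levi_coe,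
    show Equiv.Perm.sign (⟨![2,3,0,1], ![2,3,0,1], by decide, by decide⟩ : Equiv.Perm (Fin 4)) = 1 from by decide]
  norm_num
@[simp] lemma lv_2302 : levi (![2,3,0,2] : Fin 4 → Fin 4) = 0 := levi_zero (by decide)
@[simp] lemma lv_2303 : levi (![2,3,0,3] : Fin 4 → Fin 4) = 0 := levi_zero (by decide)
@[simp] lemma lv_2310 : levi (![2,3,1,0] : Fin 4 → Fin 4) = -1 := by
  rw [show (![2,3,1,0] : Fin 4 → Fin 4) = ⇑(⟨![2,3,1,0], ![3,2,0,1], by decide, by decide⟩ : Equiv.Perm (Fin 4)) from rfl, levi_coe,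
    show Equiv.Perm.sign (⟨![2,3,1,0], ![3,2,0,1], by decide, by decide⟩ : Equiv.Perm (Fin 4)) = -1 from by decide]
  norm_num
@[simp] lemma lv_2311 : levi (![2,3,1,1] : Fin 4 → Fin 4) = 0 := levi_zero (by decide)
@[simp] lemma lv_2312 : levi (![2,3,1,2] : Fin 4 → Fin 4) = 0 := levi_zero (by decide)
@[simp] lemma lv_2313 : levi (![2,3,1,3] : Fin 4 → Fin 4) = 0 := levi_zero (by decide)
@[simp] lemma lv_2320 : levi (![2,3,2,0] : Fin 4 → Fin 4) = 0 := levi_zero (by decide)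
@[simp] lemma lv_2321 : levi (![2,3,2,1] : Fin 4 → Fin 4) = 0 := levi_zero (by decide)
@[simp] lemma lv_2322 : levi (![2,3,2,2] : Fin 4 → Fin 4) = 0 := levi_zero (by decide)
@[simp] lemma lv_2323 : levi (![2,3,2,3] : Fin 4 → Fin 4) = 0 := levi_zero (by decide)
@[simp] lemma lv_2330 : levi (![2,3,3,0] : Fin 4 → Fin 4) = 0 := levi_zero (by decide)
@[simp] lemma lv_2331 : levi (![2,3,3,1] : Fin 4 → Fin 4) = 0 := levi_zero (by decide)
@[simp] lemma lv_2332 : levi (![2,3,3,2] : Fin 4 → Fin 4) = 0 := levi_zero (by decide)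
@[simp] lemma lv_2333 : levi (![2,3,3,3] : Fin 4 → Fin 4) = 0 := levi_zero (by decide)
@[simp] lemma lv_3000 : levi (![3,0,0,0] : Fin 4 → Fin 4) = 0 := levi_zero (by decide)
@[simp] lemma lv_3001 : levi (![3,0,0,1] : Fin 4 → Fin 4) = 0 := levi_zero (by decide)
@[simp] lemma lv_3002 : levi (![3,0,0,2] : Fin 4 → Fin 4) = 0 := levi_zero (by decide)
@[simp] lemma lv_3003 : levi (![3,0,0,3] : Fin 4 → Fin 4) = 0 := levi_zero (by decide)
@[simp] lemma lv_3010 : levi (![3,0,1,0] : Fin 4 → Fin 4) = 0 := levi_zero (by decide)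
@[simp] lemma lv_3011 : levi (![3,0,1,1] : Fin 4 → Fin 4) = 0 := levi_zero (by decide)
@[simp] lemma lv_3012 : levi (![3,0,1,2] : Fin 4 → Fin 4) = -1 := by
  rw [show (![3,0,1,2] : Fin 4 → Fin 4) = ⇑(⟨![3,0,1,2], ![1,2,3,0], by decide, by decide⟩ : Equiv.Perm (Fin 4)) from rfl, levi_coe,
    show Equiv.Perm.sign (⟨![3,0,1,2], ![1,2,3,0], by decide, by decide⟩ : Equiv.Perm (Fin 4)) = -1 from by decide]
  norm_num
@[simp] lemma lv_3013 : levi (![3,0,1,3] : Fin 4 → Fin 4) = 0 := levi_zero (by decide)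
@[simp] lemma lv_3020 : levi (![3,0,2,0] : Fin 4 → Fin 4) = 0 := levi_zero (by decide)
@[simp] lemma lv_3021 : levi (![3,0,2,1] : Fin 4 → Fin 4) = 1 := by
  rw [show (![3,0,2,1] : Fin 4 → Fin 4) = ⇑(⟨![3,0,2,1], ![1,3,2,0], by decide, by decide⟩ : Equiv.Perm (Fin 4)) from rfl, levi_coe,
    show Equiv.Perm.sign (⟨![3,0,2,1], ![1,3,2,0], by decide, by decide⟩ : Equiv.Perm (Fin 4)) = 1 from by decide]
  norm_num
@[simp] lemma lv_3022 : levi (![3,0,2,2] : Fin 4 → Fin 4) = 0 := levi_zero (by decide)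
@[simp] lemma lv_3023 : levi (![3,0,2,3] : Fin 4 → Fin 4) = 0 := levi_zero (by decide)
@[simp] lemma lv_3030 : levi (![3,0,3,0] : Fin 4 → Fin 4) = 0 := levi_zero (by decide)
@[simp] lemma lv_3031 : levi (![3,0,3,1] : Fin 4 → Fin 4) = 0 := levi_zero (by decide)
@[simp] lemma lv_3032 : levi (![3,0,3,2] : Fin 4 → Fin 4) = 0 := levi_zero (by decide)
@[simp] lemma lv_3033 : levi (![3,0,3,3] : Fin 4 → Fin 4) = 0 := levi_zero (by decide)
@[simp] lemma lv_3100 : levi (![3,1,0,0] : Fin 4 → Fin 4) = 0 := levi_zero (by decide)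
@[simp] lemma lv_3101 : levi (![3,1,0,1] : Fin 4 → Fin 4) = 0 := levi_zero (by decide)
@[simp] lemma lv_3102 : levi (![3,1,0,2] : Fin 4 → Fin 4) = 1 := by
  rw [show (![3,1,0,2] : Fin 4 → Fin 4) = ⇑(⟨![3,1,0,2], ![2,1,3,0], by decide, by decide⟩ : Equiv.Perm (Fin 4)) from rfl, levi_coe,
    show Equiv.Perm.sign (⟨![3,1,0,2], ![2,1,3,0], by decide, by decide⟩ : Equiv.Perm (Fin 4)) = 1 from by decide]
  norm_num
@[simp] lemma lv_3103 : levi (![3,1,0,3] : Fin 4 → Fin 4) = 0 := levi_zero (by decide)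
@[simp] lemma lv_3110 : levi (![3,1,1,0] : Fin 4 → Fin 4) = 0 := levi_zero (by decide)
@[simp] lemma lv_3111 : levi (![3,1,1,1] : Fin 4 → Fin 4) = 0 := levi_zero (by decide)
@[simp] lemma lv_3112 : levi (![3,1,1,2] : Fin 4 → Fin 4) = 0 := levi_zero (by decide)
@[simp] lemma lv_3113 : levi (![3,1,1,3] : Fin 4 → Fin 4) = 0 := levi_zero (by decide)
@[simp] lemma lv_3120 : levi (![3,1,2,0] : Fin 4 → Fin 4) = -1 := by
  rw [show (![3,1,2,0] : Fin 4 → Fin 4) = ⇑(⟨![3,1,2,0], ![3,1,2,0], by decide, by decide⟩ : Equiv.Perm (Fin 4)) from rfl, levi_coe,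
    show Equiv.Perm.sign (⟨![3,1,2,0], ![3,1,2,0], by decide, by decide⟩ : Equiv.Perm (Fin 4)) = -1 from by decide]
  norm_num
@[simp] lemma lv_3121 : levi (![3,1,2,1] : Fin 4 → Fin 4) = 0 := levi_zero (by decide)
@[simp] lemma lv_3122 : levi (![3,1,2,2] : Fin 4 → Fin 4) = 0 := levi_zero (by decide)
@[simp] lemma lv_3123 : levi (![3,1,2,3] : Fin 4 → Fin 4) = 0 := levi_zero (by decide)
@[simp] lemma lv_3130 : levi (![3,1,3,0] : Fin 4 → Fin 4) = 0 := levi_zero (by decide)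
@[simp] lemma lv_3131 : levi (![3,1,3,1] : Fin 4 → Fin 4) = 0 := levi_zero (by decide)
@[simp] lemma lv_3132 : levi (![3,1,3,2] : Fin 4 → Fin 4) = 0 := levi_zero (by decide)
@[simp] lemma lv_3133 : levi (![3,1,3,3] : Fin 4 → Fin 4) = 0 := levi_zero (by decide)
@[simp] lemma lv_3200 : levi (![3,2,0,0] : Fin 4 → Fin 4) = 0 := levi_zero (by decide)
@[simp] lemma lv_3201 : levi (![3,2,0,1] : Fin 4 → Fin 4) = -1 := by
  rw [show (![3,2,0,1] : Fin 4 → Fin 4) = ⇑(⟨![3,2,0,1], ![2,3,1,0], by decide, by decide⟩ : Equiv.Perm (Fin 4)) from rfl, levi_coe,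
    show Equiv.Perm.sign (⟨![3,2,0,1], ![2,3,1,0], by decide, by decide⟩ : Equiv.Perm (Fin 4)) = -1 from by decide]
  norm_num
@[simp] lemma lv_3202 : levi (![3,2,0,2] : Fin 4 → Fin 4) = 0 := levi_zero (by decide)
@[simp] lemma lv_3203 : levi (![3,2,0,3] : Fin 4 → Fin 4) = 0 := levi_zero (by decide)
@[simp] lemma lv_3210 : levi (![3,2,1,0] : Fin 4 → Fin 4) = 1 := by
  rw [show (![3,2,1,0] : Fin 4 → Fin 4) = ⇑(⟨![3,2,1,0], ![3,2,1,0], by decide, by decide⟩ : Equiv.Perm (Fin 4)) from rfl, levi_coe,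
    show Equiv.Perm.sign (⟨![3,2,1,0], ![3,2,1,0], by decide, by decide⟩ : Equiv.Perm (Fin 4)) = 1 from by decide]
  norm_num
@[simp] lemma lv_3211 : levi (![3,2,1,1] : Fin 4 → Fin 4) = 0 := levi_zero (by decide)
@[simp] lemma lv_3212 : levi (![3,2,1,2] : Fin 4 → Fin 4) = 0 := levi_zero (by decide)
@[simp] lemma lv_3213 : levi (![3,2,1,3] : Fin 4 → Fin 4) = 0 := levi_zero (by decide)
@[simp] lemma lv_3220 : levi (![3,2,2,0] : Fin 4 → Fin 4) = 0 := levi_zero (by decide)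
@[simp] lemma lv_3221 : levi (![3,2,2,1] : Fin 4 → Fin 4) = 0 := levi_zero (by decide)
@[simp] lemma lv_3222 : levi (![3,2,2,2] : Fin 4 → Fin 4) = 0 := levi_zero (by decide)
@[simp] lemma lv_3223 : levi (![3,2,2,3] : Fin 4 → Fin 4) = 0 := levi_zero (by decide)
@[simp] lemma lv_3230 : levi (![3,2,3,0] : Fin 4 → Fin 4) = 0 := levi_zero (by decide)
@[simp] lemma lv_3231 : levi (![3,2,3,1] : Fin 4 → Fin 4) = 0 := levi_zero (by decide)
@[simp] lemma lv_3232 : levi (![3,2,3,2] : Fin 4 → Fin 4) = 0 := levi_zero (by decide)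
@[simp] lemma lv_3233 : levi (![3,2,3,3] : Fin 4 → Fin 4) = 0 := levi_zero (by decide)
@[simp] lemma lv_3300 : levi (![3,3,0,0] : Fin 4 → Fin 4) = 0 := levi_zero (by decide)
@[simp] lemma lv_3301 : levi (![3,3,0,1] : Fin 4 → Fin 4) = 0 := levi_zero (by decide)
@[simp] lemma lv_3302 : levi (![3,3,0,2] : Fin 4 → Fin 4) = 0 := levi_zero (by decide)
@[simp] lemma lv_3303 : levi (![3,3,0,3] : Fin 4 → Fin 4) = 0 := levi_zero (by decide)
@[simp] lemma lv_3310 : levi (![3,3,1,0] : Fin 4 → Fin 4) = 0 := levi_zero (by decide)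
@[simp] lemma lv_3311 : levi (![3,3,1,1] : Fin 4 → Fin 4) = 0 := levi_zero (by decide)
@[simp] lemma lv_3312 : levi (![3,3,1,2] : Fin 4 → Fin 4) = 0 := levi_zero (by decide)
@[simp] lemma lv_3313 : levi (![3,3,1,3] : Fin 4 → Fin 4) = 0 := levi_zero (by decide)
@[simp] lemma lv_3320 : levi (![3,3,2,0] : Fin 4 → Fin 4) = 0 := levi_zero (by decide)
@[simp] lemma lv_3321 : levi (![3,3,2,1] : Fin 4 → Fin 4) = 0 := levi_zero (by decide)
@[simp] lemma lv_3322 : levi (![3,3,2,2] : Fin 4 → Fin 4) = 0 := levi_zero (by decide)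
@[simp] lemma lv_3323 : levi (![3,3,2,3] : Fin 4 → Fin 4) = 0 := levi_zero (by decide)
@[simp] lemma lv_3330 : levi (![3,3,3,0] : Fin 4 → Fin 4) = 0 := levi_zero (by decide)
@[simp] lemma lv_3331 : levi (![3,3,3,1] : Fin 4 → Fin 4) = 0 := levi_zero (by decide)
@[simp] lemma lv_3332 : levi (![3,3,3,2] : Fin 4 → Fin 4) = 0 := levi_zero (by decide)
@[simp] lemma lv_3333 : levi (![3,3,3,3] : Fin 4 → Fin 4) = 0 := levi_zero (by decide)
lemma K5 (x : Matrix (Fin 4) (Fin 4) ℂ) (hx : xᵀ = -x) :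
    ∑ g : Fin 4 → Fin 4, levi g * (x (g 0) (g 1) * x (g 2) (g 3)) =
      8 * (x 0 1 * x 2 3 - x 0 2 * x 1 3 + x 0 3 * x 1 2) := by
  have ha : ∀ i j : Fin 4, x j i = - x i j := fun i j => by
    have := congrFun (congrFun hx i) j
    simpa [Matrix.transpose_apply, Matrix.neg_apply] using this
  have hd : ∀ i : Fin 4, x i i = 0 := fun i => by linear_combination (ha i i) / 2
  rw [sum_quad]
  simp only [Fin.sum_univ_four, Matrix.cons_val_zero, Matrix.cons_val_one, Matrix.head_cons,
    Matrix.cons_val_two, Matrix.tail_cons, Matrix.cons_val_three]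
  simp
  simp only [show x 1 0 = -x 0 1 from ha 0 1, show x 2 0 = -x 0 2 from ha 0 2,
    show x 3 0 = -x 0 3 from ha 0 3, show x 2 1 = -x 1 2 from ha 1 2,
    show x 3 1 = -x 1 3 from ha 1 3, show x 3 2 = -x 2 3 from ha 2 3,
    hd 0, hd 1, hd 2, hd 3]
  ring

lemma key (w : Matrix (Fin 6) (Fin 6) ℂ) (hw : wᵀ = -w) {α β : Fin 6} (hab : α ≠ β)
    {e : Fin 4 → Fin 6} (he : Function.Injective e)
    (heα : ∀ m, e m ≠ α) (heβ : ∀ m, e m ≠ β) :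
    ∑ f : Fin 4 → Fin 6, w (f 0) (f 1) * w (f 2) (f 3) * levi (ext6 f α β)
      = levi (ext6 e α β) * (8 * (w (e 0) (e 1) * w (e 2) (e 3)
          - w (e 0) (e 2) * w (e 1) (e 3) + w (e 0) (e 3) * w (e 1) (e 2))) := by
  rw [sum_reduce w hab he heα heβ]
  have step : ∀ g : Fin 4 → Fin 4,
      w (e (g 0)) (e (g 1)) * w (e (g 2)) (e (g 3)) * levi (ext6 (e ∘ g) α β)
      = levi (ext6 e α β) * (levi g
          * ((w.submatrix e e) (g 0) (g 1) * (w.submatrix e e) (g 2) (g 3))) := by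
    intro g
    rw [ext6_comp, levi_comp, levi_hat]
    simp only [Matrix.submatrix_apply]
    ring
  rw [Finset.sum_congr rfl (fun g _ => step g), ← Finset.mul_sum]
  congr 1
  have hx : (w.submatrix e e)ᵀ = -(w.submatrix e e) := by
    ext i j
    simp only [Matrix.transpose_apply, Matrix.submatrix_apply, Matrix.neg_apply]
    have h := congrFun (congrFun hw (e i)) (e j)
    simpa [Matrix.transpose_apply, Matrix.neg_apply] using h
  rw [K5 _ hx]
  simp only [Matrix.submatrix_apply]
lemma det4_antisym (x : Matrix (Fin 4) (Fin 4) ℂ) (hx : xᵀ = -x) :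
    x.det = (x 0 1 * x 2 3 - x 0 2 * x 1 3 + x 0 3 * x 1 2) ^ 2 := by
  have ha : ∀ i j : Fin 4, x j i = - x i j := fun i j => by
    have h := congrFun (congrFun hx i) j
    simpa [Matrix.transpose_apply, Matrix.neg_apply] using h
  have hd : ∀ i : Fin 4, x i i = 0 := fun i => by linear_combination (ha i i) / 2
  rw [Matrix.det_succ_row_zero]
  simp [Fin.sum_univ_succ, Matrix.det_fin_three, Matrix.submatrix_apply, Fin.succAbove]
  simp only [show x 1 0 = -x 0 1 from ha 0 1, show x 2 0 = -x 0 2 from ha 0 2,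
    show x 3 0 = -x 0 3 from ha 0 3, show x 2 1 = -x 1 2 from ha 1 2,
    show x 3 1 = -x 1 3 from ha 1 3, show x 3 2 = -x 2 3 from ha 2 3,
    hd 0, hd 1, hd 2, hd 3]
  ring

lemma rank_submatrix_le' (A : Matrix (Fin 6) (Fin 6) ℂ) (e f : Fin 4 → Fin 6) :
    (A.submatrix e f).rank ≤ A.rank := by
  classical
  have h1 : A.submatrix e f =
      (Matrix.of fun (i : Fin 4) (t : Fin 6) => if t = e i then (1:ℂ) else 0) * A
        * (Matrix.of fun (t : Fin 6) (j : Fin 4) => if t = f j then (1:ℂ) else 0) := by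
    ext i j
    simp [Matrix.mul_apply, ite_mul, mul_ite, Finset.sum_ite_eq, Finset.sum_ite_eq']
  rw [h1]
  exact le_trans (Matrix.rank_mul_le_left _ _) (Matrix.rank_mul_le_right _ _)

lemma levi_pf_ne (w : Matrix (Fin 6) (Fin 6) ℂ) {α β : Fin 6} (hab : α ≠ β)
    {e : Fin 4 → Fin 6} (he : Function.Injective e)
    (heα : ∀ m, e m ≠ α) (heβ : ∀ m, e m ≠ β)
    (h0 : ∑ f : Fin 4 → Fin 6, w (f 0) (f 1) * w (f 2) (f 3) * levi (ext6 f α β) = 0)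
    (hw : wᵀ = -w) :
    w (e 0) (e 1) * w (e 2) (e 3) - w (e 0) (e 2) * w (e 1) (e 3)
      + w (e 0) (e 3) * w (e 1) (e 2) = 0 := by
  rw [key w hw hab he heα heβ] at h0
  rcases mul_eq_zero.1 h0 with h | h
  · exact absurd h (levi_ext6_ne_zero hab he heα heβ)
  · rcases mul_eq_zero.1 h with h' | h'
    · norm_num at h'
    · exact h'

/-- an antisymmetric 6×6 matrix `w` has rank at most 2 (Slater rank one)
iff all contractions `Σ w_{ij} w_{kl} ε^{ijklαβ}` with `α < β` vanish. -/
theorem two_fermion_six_dim_slater_rank_one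
    (w : Matrix (Fin 6) (Fin 6) ℂ) (hw : wᵀ = -w) :
    w.rank ≤ 2 ↔ ∀ α β : Fin 6, α < β →
      (∑ f : Fin 4 → Fin 6, w (f 0) (f 1) * w (f 2) (f 3) *
        levi (fun m : Fin 6 => if h : (m : ℕ) < 4 then f ⟨m, h⟩
          else if (m : ℕ) = 4 then α else β)) = 0 := by
  have hskew : ∀ i j, w j i = -w i j := fun i j => by
    have h := congrFun (congrFun hw i) j
    simpa [Matrix.transpose_apply, Matrix.neg_apply] using h
  have hdiag : ∀ i, w i i = 0 := fun i => by linear_combination (hskew i i) / 2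
  constructor
  · intro hrank α β hlt
    show ∑ f : Fin 4 → Fin 6, w (f 0) (f 1) * w (f 2) (f 3) * levi (ext6 f α β) = 0
    have hab : α ≠ β := hlt.ne
    set s : Finset (Fin 6) := ({α, β} : Finset (Fin 6))ᶜ with hs
    have hcard : s.card = 4 := by
      rw [hs, Finset.card_compl,
        Finset.card_insert_of_notMem (by simp [hab]), Finset.card_singleton]
      rfl
    set e : Fin 4 → Fin 6 := fun i => ((s.orderIsoOfFin hcard i : s) : Fin 6) with he_def
    have hemem : ∀ m, e m ∈ s := fun m => (s.orderIsoOfFin hcard m).2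
    have heα : ∀ m, e m ≠ α := by
      intro m
      have := hemem m
      rw [hs, Finset.mem_compl] at this
      simp only [Finset.mem_insert, Finset.mem_singleton] at this
      tauto
    have heβ : ∀ m, e m ≠ β := by
      intro m
      have := hemem m
      rw [hs, Finset.mem_compl] at this
      simp only [Finset.mem_insert, Finset.mem_singleton] at this
      tauto
    have he : Function.Injective e := by
      intro i j h
      exact (s.orderIsoOfFin hcard).injective (Subtype.ext h)
    rw [key w hw hab he heα heβ]
    have hx : (w.submatrix e e)ᵀ = -(w.submatrix e e) := by
      ext i j
      simp only [Matrix.transpose_apply, Matrix.submatrix_apply, Matrix.neg_apply]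
      exact hskew (e i) (e j)
    have hdet : (w.submatrix e e).det = 0 := by
      by_contra h
      have hu : IsUnit (w.submatrix e e) :=
        (Matrix.isUnit_iff_isUnit_det _).2 (isUnit_iff_ne_zero.2 h)
      have h4 : (w.submatrix e e).rank = 4 := by
        rw [Matrix.rank_of_isUnit _ hu]
        rfl
      have h5 := rank_submatrix_le' w e e
      omega
    rw [det4_antisym _ hx] at hdet
    have hP : (w.submatrix e e) 0 1 * (w.submatrix e e) 2 3
        - (w.submatrix e e) 0 2 * (w.submatrix e e) 1 3
        + (w.submatrix e e) 0 3 * (w.submatrix e e) 1 2 = 0 := by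
      exact pow_eq_zero_iff (n := 2) (by norm_num) |>.1 hdet
    simp only [Matrix.submatrix_apply] at hP
    rw [hP]
    ring
  · intro hS
    by_cases hw0 : w = 0
    · rw [hw0]
      simp
    · have hex : ∃ a b, w a b ≠ 0 := by
        by_contra h
        push_neg at h
        exact hw0 (by ext i j; simpa using h i j)
      obtain ⟨a, b, hab0⟩ := hex
      have hab : a ≠ b := by
        intro h
        rw [h] at hab0
        exact hab0 (hdiag b)
      have hP : ∀ i j, w a b * w i j = w a i * w b j - w a j * w b i := by
        intro i j
        by_cases hia : i = a
        · subst hia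
          rw [hdiag i, hskew i b]
          ring
        by_cases hib : i = b
        · subst hib
          rw [hdiag i]
          ring
        by_cases hja : j = a
        · subst hja
          rw [hdiag j, hskew j i, hskew j b]
          ring
        by_cases hjb : j = b
        · subst hjb
          rw [hdiag j, hskew j i]
          ring
        by_cases hij : i = j
        · subst hij
          rw [hdiag i]
          ring
        -- a, b, i, j pairwise distinct
        have hc4 : ({a, b, i, j} : Finset (Fin 6)).card = 4 := by
          rw [Finset.card_insert_of_notMem (by simp [hab, Ne.symm hia, Ne.symm hja]),
            Finset.card_insert_of_notMem (by simp [Ne.symm hib, Ne.symm hjb]),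
            Finset.card_insert_of_notMem (by simp [hij]), Finset.card_singleton]
        have hcs : (({a, b, i, j} : Finset (Fin 6))ᶜ).card = 2 := by
          rw [Finset.card_compl, hc4]
          rfl
        obtain ⟨α, β, hαβ, hsc⟩ := Finset.card_eq_two.1 hcs
        have hαm : α ∉ ({a, b, i, j} : Finset (Fin 6)) := by
          have : α ∈ (({a, b, i, j} : Finset (Fin 6))ᶜ) := by
            rw [hsc]; simp
          simpa using this
        have hβm : β ∉ ({a, b, i, j} : Finset (Fin 6)) := by
          have : β ∈ (({a, b, i, j} : Finset (Fin 6))ᶜ) := by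
            rw [hsc]; simp
          simpa using this
        simp only [Finset.mem_insert, Finset.mem_singleton, not_or] at hαm hβm
        obtain ⟨hα1, hα2, hα3, hα4⟩ := hαm
        obtain ⟨hβ1, hβ2, hβ3, hβ4⟩ := hβm
        have he : Function.Injective (![a, b, i, j] : Fin 4 → Fin 6) := by
          intro m m' hm
          fin_cases m <;> fin_cases m' <;>
            first
              | rfl
              | exact absurd hm hab
              | exact absurd hm.symm hab
              | exact absurd hm hia
              | exact absurd hm.symm hia
              | exact absurd hm hib
              | exact absurd hm.symm hib
              | exact absurd hm hja
              | exact absurd hm.symm hja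
              | exact absurd hm hjb
              | exact absurd hm.symm hjb
              | exact absurd hm hij
              | exact absurd hm.symm hij
        have heα : ∀ m, (![a, b, i, j] : Fin 4 → Fin 6) m ≠ α := by
          intro m
          fin_cases m
          · exact Ne.symm hα1
          · exact Ne.symm hα2
          · exact Ne.symm hα3
          · exact Ne.symm hα4
        have heβ : ∀ m, (![a, b, i, j] : Fin 4 → Fin 6) m ≠ β := by
          intro m
          fin_cases m
          · exact Ne.symm hβ1
          · exact Ne.symm hβ2
          · exact Ne.symm hβ3
          · exact Ne.symm hβ4
        have hPf : w (![a, b, i, j] 0) (![a, b, i, j] 1) * w (![a, b, i, j] 2) (![a, b, i, j] 3)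
            - w (![a, b, i, j] 0) (![a, b, i, j] 2) * w (![a, b, i, j] 1) (![a, b, i, j] 3)
            + w (![a, b, i, j] 0) (![a, b, i, j] 3) * w (![a, b, i, j] 1) (![a, b, i, j] 2) = 0 := by
          rcases lt_or_gt_of_ne hαβ with hlt | hlt
          · have h0 := hS α β hlt
            exact levi_pf_ne w hαβ he heα heβ h0 hw
          · have h0 := hS β α hlt
            exact levi_pf_ne w (Ne.symm hαβ) he heβ heα h0 hw
        have hPf' : w a b * w i j - w a i * w b j + w a j * w b i = 0 := hPf
        linear_combination hPf'
      -- rank bound via explicit factorization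
      set M : Matrix (Fin 6) (Fin 2) ℂ :=
        Matrix.of fun i t => if t = 0 then (w a b)⁻¹ * w a i else w b i with hM
      set N : Matrix (Fin 2) (Fin 6) ℂ :=
        Matrix.of fun t j => if t = 0 then w b j else -((w a b)⁻¹ * w a j) with hN
      have hMN : w = M * N := by
        ext i j
        rw [Matrix.mul_apply, Fin.sum_univ_two]
        simp only [hM, hN, Matrix.of_apply, if_pos rfl,
          if_neg (show (1 : Fin 2) ≠ 0 by decide), if_true]
        field_simp
        linear_combination hP i j
      rw [hMN]
      refine le_trans (Matrix.rank_mul_le_left M N) (le_trans (Matrix.rank_le_card_width M) ?_)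
      simp
end

section
/- The three-fermion state w_{ijk} = (1/3)(x ε^{ijk456} + y ε^{12i4jk}) with x, y both nonzero does not have Slater rank one; concretely, for a = e₃ the projected antisymmetric matrix v_{ij} = Σ_k w_{ijk} a_k is proportional to x (E₁₂ − E₂₁) + y (E₅₆ − E₆₅), which has rank 4. -/
/-!
A change of single-particle basis `U` acts on the contraction `v_{ij} = Σ_k w_{ijk} a_k` by
the congruence `v ↦ U v Uᵀ` (with `a` replaced by `U⁻ᵀ a`), so the ranks of all such
contractions are basis invariants. For a Slater determinant `z ε^{ijk456}` every contraction
vanishes in the rows `4, 5, 6` and has rank at most `3`, whereas contracting `w` with `e₃`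
gives `(x (E₁₂ − E₂₁) + y (E₅₆ − E₆₅)) / 3`, of rank `4`.
-/

open Matrix

/-- A computable form of `levi`, so that `decide` can evaluate it. -/
def leviSign {n : ℕ} (f : Fin n → Fin n) : ℤ :=
  if h : Function.Bijective f then
    Equiv.Perm.sign ⟨f, Fintype.bijInv h, Fintype.leftInverse_bijInv h,
      Fintype.rightInverse_bijInv h⟩
  else 0

theorem levi_eq_leviSign {n : ℕ} (f : Fin n → Fin n) : levi f = leviSign f := by
  unfold levi leviSign
  split_ifs with h
  · congr 3
    exact Equiv.ext fun _ => rfl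
  · simp

theorem levi_eq_zero_of_apply_eq {n : ℕ} {f : Fin n → Fin n} {a b : Fin n} (hab : a ≠ b)
    (h : f a = f b) : levi f = 0 :=
  dif_neg fun hf => hab (hf.injective h)

-- The names use the paper's one-based indices: `levi_ij3456 i j` is about `ε^{ij3456}`.
theorem levi_ij3456 (i j : Fin 6) :
    levi ![i, j, 2, 3, 4, 5] = (single 0 1 1 - single 1 0 1 : Matrix (Fin 6) (Fin 6) ℂ) i j := by
  have h : ∀ i j : Fin 6, leviSign ![i, j, 2, 3, 4, 5] =
      (if 0 = i ∧ 1 = j then 1 else 0) - (if 1 = i ∧ 0 = j then 1 else 0) := by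
    decide
  rw [levi_eq_leviSign, h, Matrix.sub_apply, single_apply, single_apply]
  push_cast
  rfl

theorem levi_12i4j3 (i j : Fin 6) :
    levi ![0, 1, i, 3, j, 2] = (single 4 5 1 - single 5 4 1 : Matrix (Fin 6) (Fin 6) ℂ) i j := by
  have h : ∀ i j : Fin 6, leviSign ![0, 1, i, 3, j, 2] =
      (if 4 = i ∧ 5 = j then 1 else 0) - (if 5 = i ∧ 4 = j then 1 else 0) := by
    decide
  rw [levi_eq_leviSign, h, Matrix.sub_apply, single_apply, single_apply]
  push_cast
  rfl

theorem rank_antisymm_blocks_eq_four (a b : ℂ) (ha : a ≠ 0) (hb : b ≠ 0) :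
    (a • (single 0 1 1 - single 1 0 1) + b • (single 4 5 1 - single 5 4 1) :
      Matrix (Fin 6) (Fin 6) ℂ).rank = 4 := by
  classical
  set M : Matrix (Fin 6) (Fin 6) ℂ :=
    a • (single 0 1 1 - single 1 0 1) + b • (single 4 5 1 - single 5 4 1)
  let σ : Equiv.Perm (Fin 6) := Equiv.swap 0 1 * Equiv.swap 4 5
  have hσ : ∀ i, σ i = ![1, 0, 2, 3, 5, 4] i := by decide
  have hdiag : M.submatrix (Equiv.refl _) σ = diagonal ![a, -a, 0, 0, b, -b] := by
    ext i j
    fin_cases i <;> fin_cases j <;> simp [M, hσ]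
  rw [← rank_submatrix M (Equiv.refl _) σ, hdiag, rank_diagonal, Fintype.card_subtype]
  simp [Finset.card_filter, Fin.sum_univ_six, ha, hb]

theorem Matrix.rank_le_card_of_forall_notMem_eq_zero {ι κ K : Type*} [Fintype ι] [Fintype κ]
    [Field K] (M : Matrix ι κ K) (S : Finset ι) (hM : ∀ i ∉ S, ∀ j, M i j = 0) :
    M.rank ≤ S.card := by
  classical
  let P : Matrix ι ι K := diagonal fun i => if i ∈ S then 1 else 0
  have hPM : P * M = M := by
    ext i j
    by_cases hi : i ∈ S <;> simp [P, hi, hM]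
  calc M.rank = (P * M).rank := by rw [hPM]
    _ ≤ P.rank := rank_mul_le_left _ _
    _ = S.card := by simp [P, rank_diagonal, Fintype.card_subtype]

section Tensor

variable {ι R : Type*} [Fintype ι] [CommRing R]

def contractLast (w : ι → ι → ι → R) (a : ι → R) : Matrix ι ι R :=
  of fun i j => ∑ k, w i j k * a k

theorem contractLast_apply (w : ι → ι → ι → R) (a : ι → R) (i j : ι) :
    contractLast w a i j = ∑ k, w i j k * a k :=
  rfl

def changeBasis (U : Matrix ι ι R) (w : ι → ι → ι → R) : ι → ι → ι → R :=
  fun i j k => ∑ l, ∑ m, ∑ n, w l m n * U i l * U j m * U k n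

theorem contractLast_changeBasis (U : Matrix ι ι R) (w : ι → ι → ι → R) (b : ι → R) :
    contractLast (changeBasis U w) b = U * contractLast w (Uᵀ *ᵥ b) * Uᵀ := by
  ext i j
  simp only [contractLast, changeBasis, mul_apply, of_apply, mulVec, dotProduct,
    transpose_apply, Finset.sum_mul, Finset.mul_sum]
  -- move `k` innermost and then swap `l` and `m`, to match the order of summation on the right
  conv_lhs =>
    rw [Finset.sum_comm]
    enter [2, l]
    rw [Finset.sum_comm]
    enter [2, m]
    rw [Finset.sum_comm]
  rw [Finset.sum_comm]
  exact Finset.sum_congr rfl fun m _ => Finset.sum_congr rfl fun l _ =>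
    Finset.sum_congr rfl fun n _ => Finset.sum_congr rfl fun k _ => by ring

theorem rank_contractLast_changeBasis [DecidableEq ι] {U : Matrix ι ι R} (hU : IsUnit U.det)
    (w : ι → ι → ι → R) (a : ι → R) :
    (contractLast (changeBasis U w) ((Uᵀ)⁻¹ *ᵥ a)).rank = (contractLast w a).rank := by
  have hUt : IsUnit Uᵀ.det := by rwa [det_transpose]
  rw [contractLast_changeBasis, mulVec_mulVec, mul_nonsing_inv _ hUt, one_mulVec,
    rank_mul_eq_left_of_isUnit_det _ _ hUt, rank_mul_eq_right_of_isUnit_det _ _ hU]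

end Tensor

theorem rank_contractLast_slater_le (z : ℂ) (b : Fin 6 → ℂ) :
    (contractLast (fun i j k => z * levi ![i, j, k, 3, 4, 5]) b).rank ≤ 3 := by
  refine rank_le_card_of_forall_notMem_eq_zero _ {0, 1, 2} fun i hi j => ?_
  rw [contractLast_apply]
  refine Finset.sum_eq_zero fun k _ => ?_
  have hrepeat : (0 : Fin 6) ≠ i ∧ ![i, j, k, 3, 4, 5] 0 = ![i, j, k, 3, 4, 5] i := by
    fin_cases i <;> simp_all
  rw [levi_eq_zero_of_apply_eq hrepeat.1 hrepeat.2, mul_zero, zero_mul]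

/-- the three-fermion state `w_{ijk} = (1/3)(x ε^{ijk456} + y ε^{12i4jk})`
(indices written here zero-based) with `x, y ≠ 0` does not have Slater rank one: for
`a = e₃` the projected matrix `v_{ij} = Σ_k w_{ijk} a_k` is proportional to
`x(E₁₂ − E₂₁) + y(E₅₆ − E₆₅)` and has rank 4. -/
theorem three_fermion_example_correlated (x y : ℂ) (hx : x ≠ 0) (hy : y ≠ 0) :
    let w : Fin 6 → Fin 6 → Fin 6 → ℂ := fun i j k =>
      (1 / 3) * (x * levi ![i, j, k, 3, 4, 5] + y * levi ![0, 1, i, 3, j, k])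
    let v : Matrix (Fin 6) (Fin 6) ℂ :=
      Matrix.of fun i j => ∑ k, w i j k * (if k = 2 then 1 else 0)
    (v = ((3 : ℂ)⁻¹) •
        (x • (Matrix.single 0 1 (1 : ℂ) - Matrix.single 1 0 (1 : ℂ)) +
         y • (Matrix.single 4 5 (1 : ℂ) - Matrix.single 5 4 (1 : ℂ)))) ∧
    v.rank = 4 ∧
    ¬ (∃ U : Matrix (Fin 6) (Fin 6) ℂ, U ∈ Matrix.unitaryGroup (Fin 6) ℂ ∧
        ∃ z : ℂ, z ≠ 0 ∧
          ∀ i j k : Fin 6,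
            (∑ l, ∑ m, ∑ n, w l m n * U i l * U j m * U k n) =
              z * levi ![i, j, k, 3, 4, 5]) := by
  intro w v
  have hv : v = (3 : ℂ)⁻¹ •
      (x • (single 0 1 1 - single 1 0 1) + y • (single 4 5 1 - single 5 4 1)) := by
    ext i j
    simp [v, w, levi_ij3456, levi_12i4j3]
  have hrank : v.rank = 4 := by
    rw [hv, smul_add, smul_smul, smul_smul]
    exact rank_antisymm_blocks_eq_four _ _ (by simpa using hx) (by simpa using hy)
  refine ⟨hv, hrank, ?_⟩
  rintro ⟨U, hU, z, -, hUw⟩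
  have hdet : IsUnit U.det := isUnit_det_of_left_inverse (mem_unitaryGroup_iff'.mp hU)
  have hslater : changeBasis U w = fun i j k => z * levi ![i, j, k, 3, 4, 5] :=
    funext fun i => funext fun j => funext (hUw i j)
  have hle : 4 ≤ 3 := calc
    4 = v.rank := hrank.symm
    _ = _ := (rank_contractLast_changeBasis hdet w _).symm
    _ ≤ 3 := hslater ▸ rank_contractLast_slater_le z _
  omega
end

section
/- For a totally antisymmetric 3-tensor w on Fin(2K)³, the particle-hole 'concurrence' vanishes identically: Σ over all indices of ε^{i₁…i₆} w*_{i₁i₂i₃} w_{i₄i₅i₆}-type pairings gives ⟨w̃|w⟩ = 0 for every w, i.e. the dual state w̃ obtained by particle-hole transformation and complex conjugation is always orthogonal to w. -/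
open Matrix

lemma conj_levi {n : ℕ} (f : Fin n → Fin n) : (starRingEnd ℂ) (levi f) = levi f := by
  unfold levi
  split <;> simp

lemma levi_comp_perm {n : ℕ} (f : Fin n → Fin n) (σ : Equiv.Perm (Fin n)) :
    levi (f ∘ σ) = ((Equiv.Perm.sign σ : ℤ) : ℂ) * levi f := by
  unfold levi
  by_cases h : Function.Bijective f
  · have h2 : Function.Bijective (f ∘ σ) := h.comp σ.bijective
    rw [dif_pos h2, dif_pos h]
    have he : Equiv.ofBijective (f ∘ ⇑σ) h2 = σ.trans (Equiv.ofBijective f h) := by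
      ext x; rfl
    rw [he]
    have : σ.trans (Equiv.ofBijective f h) = (Equiv.ofBijective f h) * σ := rfl
    rw [this, _root_.map_mul]
    push_cast
    ring
  · have h2 : ¬ Function.Bijective (f ∘ σ) := by
      intro hc
      have hf : f = (f ∘ ⇑σ) ∘ ⇑σ.symm := by ext x; simp
      exact h (hf ▸ hc.comp σ.symm.bijective)
    rw [dif_neg h2, dif_neg h]
    ring

/-- The permutation of `Fin 6` swapping the two blocks of three. -/
def blockSwap : Equiv.Perm (Fin 6) :=
  ⟨![3, 4, 5, 0, 1, 2], ![3, 4, 5, 0, 1, 2], by decide, by decide⟩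

lemma sign_blockSwap : Equiv.Perm.sign blockSwap = -1 := by decide

lemma levi_block_swap (i j k m n p : Fin 6) :
    levi ![m, n, p, i, j, k] = - levi ![i, j, k, m, n, p] := by
  have hfun : ![m, n, p, i, j, k] = ![i, j, k, m, n, p] ∘ ⇑blockSwap := by
    funext x; fin_cases x <;> rfl
  rw [hfun, levi_comp_perm, sign_blockSwap]
  push_cast
  ring

/-- for any totally antisymmetric three-fermion state `w` in a
six-dimensional single-particle space, the particle-hole dual `w̃_{mnp} = Σ ε^{ijkmnp} w*_{ijk}`
is orthogonal to `w`: the pairing `⟨w̃|w⟩` vanishes identically. -/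
theorem three_fermion_dual_orthogonal
    (w : Fin 6 → Fin 6 → Fin 6 → ℂ)
    (h1 : ∀ i j k, w i j k = - w j i k) (h2 : ∀ i j k, w i j k = - w i k j) :
    (∑ m, ∑ n, ∑ p,
      (starRingEnd ℂ)
        (∑ i, ∑ j, ∑ k, levi ![i, j, k, m, n, p] * (starRingEnd ℂ) (w i j k)) *
        w m n p) = 0 := by
  set G : (Fin 6 × Fin 6 × Fin 6) → (Fin 6 × Fin 6 × Fin 6) → ℂ := fun y x =>
    levi ![y.1, y.2.1, y.2.2, x.1, x.2.1, x.2.2] * w y.1 y.2.1 y.2.2 * w x.1 x.2.1 x.2.2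
    with hG
  have hLHS : (∑ m, ∑ n, ∑ p,
      (starRingEnd ℂ)
        (∑ i, ∑ j, ∑ k, levi ![i, j, k, m, n, p] * (starRingEnd ℂ) (w i j k)) *
        w m n p) = ∑ x, ∑ y, G y x := by
    simp only [map_sum, _root_.map_mul, conj_levi, Complex.conj_conj, Finset.sum_mul,
      Fintype.sum_prod_type, hG]
  rw [hLHS]
  have hanti : ∀ x y, G y x = - G x y := by
    intro x y
    simp only [hG]
    rw [levi_block_swap]
    ring
  have hswap : (∑ x, ∑ y, G y x) = ∑ y, ∑ x, G y x := Finset.sum_comm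
  have : (∑ x, ∑ y, G y x) = - ∑ x, ∑ y, G y x := by
    calc (∑ x, ∑ y, G y x) = ∑ y, ∑ x, G y x := hswap
    _ = ∑ y, ∑ x, - G x y := by
        refine Finset.sum_congr rfl fun y _ => Finset.sum_congr rfl fun x _ => ?_
        rw [hanti]
    _ = - ∑ y, ∑ x, G x y := by simp
    _ = - ∑ x, ∑ y, G y x := by rw [Finset.sum_comm]
  linear_combination this / 2
end

section
/- Let W = 𝟙_a − (K/(k−1)) P_Ψ act on the antisymmetric subspace of ℂ^{2K}⊗ℂ^{2K}, where P_Ψ projects onto |Ψ⟩ = (1/√K) Σ_{i=1}^{K} f†_{2i-1} f†_{2i}|0⟩ (the maximally correlated two-fermion state). Then for every normalized two-fermion pure state |φ⟩ whose coefficient matrix has rank at most 2(k−1) (Slater rank ≤ k−1), ⟨φ|W|φ⟩ ≥ 0; equivalently |⟨Ψ|φ⟩|² ≤ (k−1)/K for every such φ. -/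
open Matrix
open scoped InnerProductSpace

/-!
The coefficient matrix of `Ψ` is `(2√K)⁻¹` times a signed permutation matrix, whose permutation
`σ` swaps the paired modes `2i` and `2i+1`; so the overlap `⟨Ψ|φ⟩ = 2 ∑ conj Ψᵢⱼ wᵢⱼ` equals
`K^{-1/2} ∑ⱼ ± w_{σ j, j}`. Let `P` be the orthogonal projection onto the column space of `w`,
of dimension `r = rank w`. Since the columns `wⱼ` lie in its range, `w_{σ j, j} = ⟪P e_{σ j}, wⱼ⟫`,
and Cauchy–Schwarz bounds `|∑ⱼ ± w_{σ j, j}|²` by `(∑ᵢ ‖P eᵢ‖²) ‖w‖² = tr P · ‖w‖² = r/2`.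
Hence `|⟨Ψ|φ⟩|² ≤ r/(2K) ≤ (k-1)/K`.
-/

namespace OrthonormalBasis

variable {𝕜 E ι : Type*} [RCLike 𝕜] [NormedAddCommGroup E] [InnerProductSpace 𝕜 E]
  [Fintype ι]

theorem sum_norm_sq_starProjection [FiniteDimensional 𝕜 E] (b : OrthonormalBasis ι 𝕜 E)
    (K : Submodule 𝕜 E) : ∑ i, ‖K.starProjection (b i)‖ ^ 2 = Module.finrank 𝕜 K := by
  have hproj : LinearMap.IsProj K (K.starProjection : E →ₗ[𝕜] E) :=
    ⟨K.starProjection_apply_mem, fun _ => K.starProjection_eq_self_iff.mpr⟩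
  have htrace := congrArg RCLike.re hproj.trace
  rw [LinearMap.trace_eq_sum_inner _ b, map_sum, RCLike.natCast_re] at htrace
  rw [← htrace]
  refine Finset.sum_congr rfl fun i _ => ?_
  rw [ContinuousLinearMap.coe_coe, ← Submodule.inner_starProjection_left_eq_right,
    Submodule.re_inner_starProjection_eq_normSq, Submodule.starProjection_apply, Submodule.norm_coe]

end OrthonormalBasis

namespace Submodule

variable {𝕜 E ι : Type*} [RCLike 𝕜] [NormedAddCommGroup E] [InnerProductSpace 𝕜 E]
  [Fintype ι]

theorem norm_sum_inner_sq_le (K : Submodule 𝕜 E) [K.HasOrthogonalProjection] (x y : ι → E)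
    (hy : ∀ j, y j ∈ K) :
    ‖∑ j, ⟪x j, y j⟫_𝕜‖ ^ 2 ≤ (∑ j, ‖K.starProjection (x j)‖ ^ 2) * ∑ j, ‖y j‖ ^ 2 := by
  have hproj : ∀ j, ⟪x j, y j⟫_𝕜 = ⟪K.starProjection (x j), y j⟫_𝕜 := fun j => by
    rw [inner_starProjection_left_eq_right, starProjection_eq_self_iff.mpr (hy j)]
  calc ‖∑ j, ⟪x j, y j⟫_𝕜‖ ^ 2
      ≤ (∑ j, ‖K.starProjection (x j)‖ * ‖y j‖) ^ 2 := by
        simp_rw [hproj]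
        gcongr
        exact (norm_sum_le _ _).trans (Finset.sum_le_sum fun j _ => norm_inner_le_norm _ _)
    _ ≤ _ := Finset.sum_mul_sq_le_sq_mul_sq _ _ _

end Submodule

namespace Matrix

variable {𝕜 m n : Type*} [RCLike 𝕜] [Fintype m] [Fintype n] [DecidableEq m] [DecidableEq n]

theorem norm_sum_mul_apply_equiv_sq_le (w : Matrix m n 𝕜) (σ : n ≃ m) (d : n → 𝕜) {c : ℝ}
    (hd : ∀ j, ‖d j‖ = c) :
    ‖∑ j, d j * w (σ j) j‖ ^ 2 ≤ c ^ 2 * w.rank * ∑ i, ∑ j, ‖w i j‖ ^ 2 := by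
  set V := LinearMap.range (toLpLin 2 2 w)
  set e := EuclideanSpace.basisFun m 𝕜
  set x : n → EuclideanSpace 𝕜 m := fun j => starRingEnd 𝕜 (d j) • e (σ j)
  set col : n → EuclideanSpace 𝕜 m := fun j => WithLp.toLp 2 fun i => w i j
  have hrank : w.rank = Module.finrank 𝕜 V :=
    rank_eq_finrank_range_toLin w (PiLp.basisFun 2 𝕜 m) (PiLp.basisFun 2 𝕜 n)
  have hcol : ∀ j, col j ∈ V := fun j =>
    ⟨EuclideanSpace.single j 1, by ext i; simp [col, toLpLin_apply]⟩
  have hsum : ∑ j, d j * w (σ j) j = ∑ j, ⟪x j, col j⟫_𝕜 := by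
    simp [x, e, col, inner_smul_left, EuclideanSpace.inner_single_left]
  have hproj : ∑ j, ‖V.starProjection (x j)‖ ^ 2 = c ^ 2 * w.rank :=
    calc ∑ j, ‖V.starProjection (x j)‖ ^ 2
        = ∑ j, c ^ 2 * ‖V.starProjection (e (σ j))‖ ^ 2 := by
          simp_rw [x, map_smul, norm_smul, RCLike.norm_conj, hd, mul_pow]
      _ = c ^ 2 * ∑ i, ‖V.starProjection (e i)‖ ^ 2 := by
          rw [← Finset.mul_sum, Equiv.sum_comp σ fun i => ‖V.starProjection (e i)‖ ^ 2]
      _ = c ^ 2 * w.rank := by rw [e.sum_norm_sq_starProjection, hrank]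
  have hcols : ∑ j, ‖col j‖ ^ 2 = ∑ i, ∑ j, ‖w i j‖ ^ 2 := by
    simp only [col, EuclideanSpace.norm_sq_eq]
    exact Finset.sum_comm
  rw [hsum, ← hproj, ← hcols]
  exact V.norm_sum_inner_sq_le x col hcol

end Matrix

def pairPartner (K : ℕ) : Equiv.Perm (Fin (2 * K)) :=
  Function.Involutive.toPerm
    (fun j => ⟨if (j : ℕ) % 2 = 0 then j + 1 else j - 1, by split <;> omega⟩)
    (fun j => by ext; simp only; split_ifs <;> omega)

theorem pairPartner_val {K : ℕ} (j : Fin (2 * K)) :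
    (pairPartner K j : ℕ) = if (j : ℕ) % 2 = 0 then (j : ℕ) + 1 else (j : ℕ) - 1 := rfl

theorem pairing_entry_eq {R : Type*} [Ring R] {K : ℕ} (c : R) (i j : Fin (2 * K)) :
    (if (i : ℕ) % 2 = 0 ∧ (j : ℕ) = (i : ℕ) + 1 then c
      else if (j : ℕ) % 2 = 0 ∧ (i : ℕ) = (j : ℕ) + 1 then -c else 0)
      = if i = pairPartner K j then (if (j : ℕ) % 2 = 0 then -c else c) else 0 := by
  simp only [Fin.ext_iff, pairPartner_val]
  split_ifs <;> first | rfl | omega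

theorem sum_sum_conj_pairing_entry_mul {R : Type*} [CommRing R] [StarRing R] {K : ℕ} (c : R)
    (w : Matrix (Fin (2 * K)) (Fin (2 * K)) R) :
    ∑ i : Fin (2 * K), ∑ j : Fin (2 * K), starRingEnd R
        (if (i : ℕ) % 2 = 0 ∧ (j : ℕ) = (i : ℕ) + 1 then c
          else if (j : ℕ) % 2 = 0 ∧ (i : ℕ) = (j : ℕ) + 1 then -c else 0) * w i j
      = ∑ j : Fin (2 * K),
          starRingEnd R (if (j : ℕ) % 2 = 0 then -c else c) * w (pairPartner K j) j := by
  rw [Finset.sum_comm]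
  refine Finset.sum_congr rfl fun j _ => ?_
  simp_rw [pairing_entry_eq, apply_ite (starRingEnd R), map_zero, ite_mul, zero_mul,
    Finset.sum_ite_eq']
  simp

theorem fermionic_slater_witness_bound_general
    (K k : ℕ) (hk : 2 ≤ k)
    (w : Matrix (Fin (2 * K)) (Fin (2 * K)) ℂ)
    (hnorm : (∑ i : Fin (2 * K), ∑ j : Fin (2 * K), ‖w i j‖ ^ 2) = 1 / 2)
    (hrank : w.rank ≤ 2 * (k - 1)) :
    ‖2 * ∑ i : Fin (2 * K), ∑ j : Fin (2 * K),
        (starRingEnd ℂ)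
          (if (i : ℕ) % 2 = 0 ∧ (j : ℕ) = (i : ℕ) + 1 then
            (((2 * Real.sqrt K)⁻¹ : ℝ) : ℂ)
          else if (j : ℕ) % 2 = 0 ∧ (i : ℕ) = (j : ℕ) + 1 then
            -(((2 * Real.sqrt K)⁻¹ : ℝ) : ℂ)
          else 0) * w i j‖ ^ 2
      ≤ ((k : ℝ) - 1) / K := by
  set c : ℝ := (2 * Real.sqrt K)⁻¹ with hc
  have hc_sq : c ^ 2 = (4 * (K : ℝ))⁻¹ := by
    rw [hc, inv_pow, mul_pow, Real.sq_sqrt (Nat.cast_nonneg K)]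
    norm_num
  have hrank_real : (w.rank : ℝ) ≤ 2 * ((k : ℝ) - 1) := by
    have h := Nat.cast_le (α := ℝ) |>.mpr hrank
    rwa [Nat.cast_mul, Nat.cast_sub (by omega : 1 ≤ k), Nat.cast_ofNat, Nat.cast_one] at h
  have hbound := w.norm_sum_mul_apply_equiv_sq_le (pairPartner K)
    (fun j => starRingEnd ℂ (if (j : ℕ) % 2 = 0 then -(c : ℂ) else c)) (c := c)
    (fun j => by split_ifs <;> simp [hc, abs_of_nonneg])
  rw [hnorm, hc_sq] at hbound
  rw [sum_sum_conj_pairing_entry_mul, norm_mul, mul_pow, RCLike.norm_ofNat]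
  calc (2 : ℝ) ^ 2 * _ ≤ 2 ^ 2 * ((4 * (K : ℝ))⁻¹ * w.rank * (1 / 2) : ℝ) := by gcongr
    _ = ((w.rank : ℝ) / 2) / K := by ring
    _ ≤ ((k : ℝ) - 1) / K := by gcongr; linarith

/-- for the optimal fermionic Slater witness
`W = 𝟙_a − (K/(k−1)) P_Ψ` with `|Ψ⟩ = (1/√K) Σ f†_{2i-1} f†_{2i} |0⟩`
(coefficient matrix with entries `±1/(2√K)` on the pair pattern), every normalized
two-fermion state with coefficient matrix `w` of rank at most `2(k−1)` (Slater rank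
`≤ k−1`) satisfies `|⟨Ψ|φ⟩|² ≤ (k−1)/K`, i.e. `⟨φ|W|φ⟩ ≥ 0`. -/
theorem fermionic_slater_witness_bound
    (K k : ℕ) (hK : 1 ≤ K) (hk : 2 ≤ k)
    (w : Matrix (Fin (2 * K)) (Fin (2 * K)) ℂ) (hw : wᵀ = -w)
    (hnorm : (∑ i : Fin (2 * K), ∑ j : Fin (2 * K), ‖w i j‖ ^ 2) = 1 / 2)
    (hrank : w.rank ≤ 2 * (k - 1)) :
    ‖2 * ∑ i : Fin (2 * K), ∑ j : Fin (2 * K),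
        (starRingEnd ℂ)
          (if (i : ℕ) % 2 = 0 ∧ (j : ℕ) = (i : ℕ) + 1 then
            (((2 * Real.sqrt K)⁻¹ : ℝ) : ℂ)
          else if (j : ℕ) % 2 = 0 ∧ (i : ℕ) = (j : ℕ) + 1 then
            -(((2 * Real.sqrt K)⁻¹ : ℝ) : ℂ)
          else 0) * w i j‖ ^ 2
      ≤ ((k : ℝ) - 1) / K :=
  fermionic_slater_witness_bound_general K k hk w hnorm hrank
end

section
/- For the maximally correlated two-boson state |Ψ⟩ = (1/√K) Σ_{a=1}^{K} b†_a b†_a |Ω⟩ corresponding to the symmetric matrix v = (1/(√K·√2)) I, every normalized two-boson pure state |φ⟩ whose symmetric coefficient matrix has rank at most k−1 satisfies |⟨Ψ|φ⟩|² ≤ (k−1)/K; equivalently the operator W = 𝟙_s − (K/(k−1)) P_Ψ has nonnegative expectation on all such states. -/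
/-!
Let `b₁, …, b_r` be an orthonormal basis of the column space of `v`, `r = rank v`. Expanding each
column in it gives `tr v = ∑_{s,j} ⟪e_j, b_s⟫ ⟪b_s, v e_j⟫`, and Cauchy–Schwarz over the pairs
`(s, j)`, with Bessel's inequality `∑_j ‖⟪e_j, b_s⟫‖² ≤ 1` and Parseval's identity
`∑_s ‖⟪b_s, v e_j⟫‖² = ‖v e_j‖²`, yields `‖tr v‖² ≤ r ‖v‖²_F`. The overlap with `Ψ` is
`(√K √2)⁻¹ tr v`.
-/

open Matrix Module

open scoped InnerProductSpace

theorem norm_sum_mul_sq_le {𝕜 ι : Type*} [RCLike 𝕜] [Fintype ι] (f g : ι → 𝕜) :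
    ‖∑ i, f i * g i‖ ^ 2 ≤ (∑ i, ‖f i‖ ^ 2) * ∑ i, ‖g i‖ ^ 2 := by
  calc ‖∑ i, f i * g i‖ ^ 2 ≤ (∑ i, ‖f i‖ * ‖g i‖) ^ 2 := by
        gcongr; exact (norm_sum_le _ _).trans_eq (by simp_rw [norm_mul])
    _ ≤ _ := Finset.sum_mul_sq_le_sq_mul_sq _ _ _

theorem Orthonormal.norm_sum_inner_sq_le_finrank_mul {𝕜 E ι : Type*} [RCLike 𝕜]
    [NormedAddCommGroup E] [InnerProductSpace 𝕜 E] [Fintype ι] {e : ι → E}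
    (he : Orthonormal 𝕜 e) (U : Submodule 𝕜 E) [FiniteDimensional 𝕜 U] {c : ι → E}
    (hc : ∀ j, c j ∈ U) :
    ‖∑ j, ⟪e j, c j⟫_𝕜‖ ^ 2 ≤ finrank 𝕜 U * ∑ j, ‖c j‖ ^ 2 := by
  set b := stdOrthonormalBasis 𝕜 U
  have hexpand : ∀ j, ⟪e j, c j⟫_𝕜 = ∑ s, ⟪e j, (b s : E)⟫_𝕜 * ⟪b s, ⟨c j, hc j⟩⟫_𝕜 := by
    intro j
    conv_lhs => rw [show c j = ((⟨c j, hc j⟩ : U) : E) from rfl, ← b.sum_repr' ⟨c j, hc j⟩]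
    simp [inner_sum, inner_smul_right, mul_comm]
  have hbessel : ∑ s, ∑ j, ‖⟪e j, (b s : E)⟫_𝕜‖ ^ 2 ≤ finrank 𝕜 U := by
    calc ∑ s, ∑ j, ‖⟪e j, (b s : E)⟫_𝕜‖ ^ 2 ≤ ∑ s : Fin (finrank 𝕜 U), (1 : ℝ) := by
          gcongr with s
          simpa [Submodule.norm_coe, b.orthonormal.1 s] using
            he.sum_inner_products_le (b s : E) (s := Finset.univ)
      _ = finrank 𝕜 U := by simp
  have hparseval : ∑ s, ∑ j, ‖⟪b s, ⟨c j, hc j⟩⟫_𝕜‖ ^ 2 = ∑ j, ‖c j‖ ^ 2 := by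
    rw [Finset.sum_comm]
    simp_rw [b.sum_sq_norm_inner_right, Submodule.coe_norm]
  calc ‖∑ j, ⟪e j, c j⟫_𝕜‖ ^ 2
      = ‖∑ p : Fin (finrank 𝕜 U) × ι,
          ⟪e p.2, (b p.1 : E)⟫_𝕜 * ⟪b p.1, ⟨c p.2, hc p.2⟩⟫_𝕜‖ ^ 2 := by
        rw [Fintype.sum_prod_type, Finset.sum_comm]; simp_rw [hexpand]
    _ ≤ (∑ s, ∑ j, ‖⟪e j, (b s : E)⟫_𝕜‖ ^ 2) *
          ∑ s, ∑ j, ‖⟪b s, (⟨c j, hc j⟩ : U)⟫_𝕜‖ ^ 2 :=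
        (norm_sum_mul_sq_le _ _).trans_eq (by simp only [Fintype.sum_prod_type])
    _ ≤ finrank 𝕜 U * ∑ j, ‖c j‖ ^ 2 := by
        rw [hparseval]; gcongr

theorem Matrix.norm_trace_sq_le_rank_mul {𝕜 n : Type*} [RCLike 𝕜] [Fintype n] [DecidableEq n]
    (A : Matrix n n 𝕜) : ‖A.trace‖ ^ 2 ≤ A.rank * ∑ i, ∑ j, ‖A i j‖ ^ 2 := by
  have hrank : finrank 𝕜 (LinearMap.range (toEuclideanLin A)) = A.rank := by
    rw [toEuclideanLin_eq_toLin_orthonormal]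
    exact (rank_eq_finrank_range_toLin A _ _).symm
  have hcols := Orthonormal.norm_sum_inner_sq_le_finrank_mul
    (EuclideanSpace.orthonormal_single (𝕜 := 𝕜) (ι := n)) (LinearMap.range (toEuclideanLin A))
    (c := fun j => toEuclideanLin A (EuclideanSpace.single j 1))
    (fun j => LinearMap.mem_range_self _ _)
  rw [hrank] at hcols
  simp only [toLpLin_apply, PiLp.ofLp_single, mulVec_single, MulOpposite.op_one,
    one_smul, EuclideanSpace.inner_single_left, map_one, col_apply, one_mul,
    EuclideanSpace.norm_sq_eq] at hcols
  rwa [Finset.sum_comm] at hcols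

theorem bosonic_slater_witness_bound_general
    (K k : ℕ) (hk : 2 ≤ k)
    (v : Matrix (Fin K) (Fin K) ℂ)
    (hnorm : (∑ i, ∑ j, ‖v i j‖ ^ 2) = 1 / 2)
    (hrank : v.rank ≤ k - 1) :
    ‖2 * ∑ i, ∑ j,
        (starRingEnd ℂ)
          (if i = j then (((Real.sqrt K * Real.sqrt 2)⁻¹ : ℝ) : ℂ) else 0) * v i j‖ ^ 2
      ≤ ((k : ℝ) - 1) / K := by
  set c : ℝ := (Real.sqrt K * Real.sqrt 2)⁻¹
  have hoverlap : ∑ i, ∑ j, (starRingEnd ℂ) (if i = j then (c : ℂ) else 0) * v i j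
      = c * v.trace := by
    simp only [apply_ite, Complex.conj_ofReal, map_zero, ite_mul, zero_mul, Finset.sum_ite_eq,
      Finset.mem_univ, if_true, trace, diag_apply, Finset.mul_sum]
  have hc : c ^ 2 = (2 * (K : ℝ))⁻¹ := by
    rw [inv_pow, mul_pow, Real.sq_sqrt K.cast_nonneg, Real.sq_sqrt zero_le_two, mul_comm]
  have hrank' : (v.rank : ℝ) ≤ k - 1 := by
    rw [← Nat.cast_one, ← Nat.cast_sub (by omega)]; exact_mod_cast hrank
  rw [hoverlap]
  calc ‖2 * (c * v.trace)‖ ^ 2 = 2 / (K : ℝ) * ‖v.trace‖ ^ 2 := by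
        simp only [Complex.norm_mul, Complex.norm_ofNat, Complex.norm_real, Real.norm_eq_abs,
          mul_pow, sq_abs, hc, _root_.mul_inv_rev]
        ring
    _ ≤ 2 / (K : ℝ) * (v.rank * (1 / 2)) := by
        rw [← hnorm]; gcongr; exact v.norm_trace_sq_le_rank_mul
    _ ≤ 2 / (K : ℝ) * ((k - 1) * (1 / 2)) := by gcongr
    _ = (k - 1) / K := by ring

/-- for the maximally correlated two-boson state
`|Ψ⟩ = (1/√K) Σ b†_a b†_a |Ω⟩`, with coefficient matrix `(1/(√K √2)) I`, every
normalized two-boson state whose symmetric coefficient matrix `v` has rank at most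
`k−1` satisfies `|⟨Ψ|φ⟩|² ≤ (k−1)/K`; equivalently the witness
`W = 𝟙_s − (K/(k−1)) P_Ψ` has nonnegative expectation on all such states. -/
theorem bosonic_slater_witness_bound
    (K k : ℕ) (hK : 1 ≤ K) (hk : 2 ≤ k)
    (v : Matrix (Fin K) (Fin K) ℂ) (hv : vᵀ = v)
    (hnorm : (∑ i, ∑ j, ‖v i j‖ ^ 2) = 1 / 2)
    (hrank : v.rank ≤ k - 1) :
    ‖2 * ∑ i, ∑ j,
        (starRingEnd ℂ)
          (if i = j then (((Real.sqrt K * Real.sqrt 2)⁻¹ : ℝ) : ℂ) else 0) * v i j‖ ^ 2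
      ≤ ((k : ℝ) - 1) / K :=
  bosonic_slater_witness_bound_general K k hk v hnorm hrank
end
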